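/- arXiv:2404.11533 — 6 statements merged into one kernel-verified Lean document; each statement's English description precedes it below -/
import Mathlib

section
/- Let r ≥ 2 and d ≥ 1 be integers and set n = (r-1)(d+1)+1. For any points x_1, …, x_n in ℝ^d (i.e., any map x : Fin n → ℝ^d) there exists a partition of the index set {1,…,n} into r pairwise disjoint sets A_1, …, A_r covering all indices such that the convex hulls conv{x_i : i ∈ A_1}, …, conv{x_i : i ∈ A_r} have a common point. -/
/-!
Sarkaria's proof. Lift each point `x i` to `(1, x i) ∈ ℝ^{d+1}` and tensor it with each of the
`r` vertices `v_j` of a simplex in `ℝ^{r-1}` centred at the origin. Each of the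
`(r-1)(d+1) + 1` families `(v_j ⊗ (1, x i))_j` has `0` in its convex hull, so by Bárány's colorful
Carathéodory theorem in `ℝ^{r-1} ⊗ ℝ^{d+1}` there are colors `c i` and convex weights `w` with
`∑ i, w i • v_{c i} ⊗ (1, x i) = 0`. As the only linear relations among the `v_j` are the multiples
of `∑ j, v_j = 0`, the sums `∑_{c i = j} w i • (1, x i)` agree for all `j`, and normalizing their
common value gives a point in the convex hull of every color class.

For colorful Carathéodory, take a colorful choice whose hull is closest to `0`, with nearest
point `q ≠ 0`. Then `q` lies on the supporting hyperplane `⟪q, ·⟫ = ‖q‖²` of that hull, so by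
Carathéodory it is already in the hull of at most `dim` of the chosen points. Recoloring an unused
index by a point of its family with `⟪q, ·⟫ ≤ 0` yields a colorful hull closer to `0`.
-/

open Finset Metric Module Set
open scoped RealInnerProductSpace

section Caratheodory

variable {𝕜 E : Type*} [Field 𝕜] [AddCommGroup E] [Module 𝕜 E] [FiniteDimensional 𝕜 E]

lemma AffineIndependent.card_le_finrank_of_forall_eq {ι : Type*} [Fintype ι] {p : ι → E}
    (hp : AffineIndependent 𝕜 p) {ℓ : Dual 𝕜 E} (hℓ : ℓ ≠ 0) {a : 𝕜} (hpa : ∀ i, ℓ (p i) = a) :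
    Fintype.card ι ≤ finrank 𝕜 E := by
  have hspan : vectorSpan 𝕜 (range p) ≤ LinearMap.ker ℓ := by
    rw [vectorSpan_def, Submodule.span_le]
    rintro _ ⟨_, ⟨i, rfl⟩, _, ⟨j, rfl⟩, rfl⟩
    simp [hpa]
  have := Submodule.finrank_mono hspan
  have := ℓ.finrank_ker_add_one_of_ne_zero hℓ
  have := hp.card_le_finrank_succ
  omega

variable [LinearOrder 𝕜] [IsStrictOrderedRing 𝕜]

lemma exists_finset_card_le_finrank_mem_convexHull_image {ι : Type*} {g : ι → E}
    {ℓ : Dual 𝕜 E} (hℓ : ℓ ≠ 0) {a : 𝕜} (hga : ∀ i, a ≤ ℓ (g i)) {q : E}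
    (hq : q ∈ convexHull 𝕜 (range g)) (hqa : ℓ q = a) :
    ∃ S : Finset ι, S.card ≤ finrank 𝕜 E ∧ q ∈ convexHull 𝕜 (g '' S) := by
  classical
  obtain ⟨ι', _, z, w, hzg, hz, hw0, hw1, hwz⟩ := eq_pos_convex_span_of_mem_convexHull hq
  choose idx hidx using fun j => hzg (mem_range_self j)
  have hza : ∀ j, ℓ (z j) = a := by
    have hsum : ∑ j, w j * (ℓ (z j) - a) = 0 :=
      calc ∑ j, w j * (ℓ (z j) - a) = ℓ (∑ j, w j • z j) - (∑ j, w j) * a := by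
            simp [mul_sub, sum_sub_distrib, sum_mul]
        _ = 0 := by rw [hwz, hw1, hqa, one_mul, sub_self]
    intro j
    have := (sum_eq_zero_iff_of_nonneg fun j _ =>
      mul_nonneg (hw0 j).le (sub_nonneg.2 (hidx j ▸ hga (idx j)))).1 hsum j (mem_univ j)
    have := (mul_eq_zero.1 this).resolve_left (hw0 j).ne'
    linarith
  refine ⟨univ.image idx, card_image_le.trans (hz.card_le_finrank_of_forall_eq hℓ hza), ?_⟩
  rw [← hwz]
  refine (convex_convexHull 𝕜 _).sum_mem (fun j _ => (hw0 j).le) hw1 fun j _ => ?_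
  exact subset_convexHull 𝕜 _ ⟨idx j, by simp, hidx j⟩

end Caratheodory

section Colorful

variable {E : Type*} [NormedAddCommGroup E] [InnerProductSpace ℝ E]

lemma norm_sq_le_inner_of_forall_norm_le {K : Set E} (hK : Convex ℝ K) {q : E} (hq : q ∈ K)
    (hmin : ∀ z ∈ K, ‖q‖ ≤ ‖z‖) {z : E} (hz : z ∈ K) : ‖q‖ ^ 2 ≤ ⟪q, z⟫ := by
  have : Nonempty K := ⟨⟨q, hq⟩⟩
  have hinf : ‖0 - q‖ = ⨅ w : K, ‖0 - (w : E)‖ := by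
    simp only [zero_sub, norm_neg]
    have hbdd : BddBelow (range fun w : K => ‖(w : E)‖) :=
      ⟨0, forall_mem_range.2 fun _ => norm_nonneg _⟩
    exact le_antisymm (le_ciInf fun w => hmin w w.2) (ciInf_le hbdd ⟨q, hq⟩)
  have := (norm_eq_iInf_iff_real_inner_le_zero hK hq).1 hinf z hz
  rw [zero_sub, inner_neg_left, inner_sub_right, real_inner_self_eq_norm_sq] at this
  linarith

theorem colorful_caratheodory [FiniteDimensional ℝ E] {ι κ : Type*} [Fintype ι] [Finite κ]
    (hι : finrank ℝ E < Fintype.card ι) (f : ι → κ → E)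
    (hf : ∀ i, (0 : E) ∈ convexHull ℝ (range (f i))) :
    ∃ c : ι → κ, (0 : E) ∈ convexHull ℝ (range fun i => f i (c i)) := by
  classical
  set K : (ι → κ) → Set E := fun c => convexHull ℝ (range fun i => f i (c i))
  have : Nonempty ι := Fintype.card_pos_iff.1 (by omega)
  have : Nonempty (ι → κ) := ⟨fun i =>
    (range_nonempty_iff_nonempty.1 ((convexHull_nonempty_iff (𝕜 := ℝ)).1 ⟨0, hf i⟩)).some⟩
  obtain ⟨c, hc⟩ := Finite.exists_min fun c => infDist 0 (K c)
  obtain ⟨q, hqK, hq⟩ :=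
    ((finite_range fun i => f i (c i)).isCompact_convexHull ℝ).exists_infDist_eq_dist
      (convexHull_nonempty_iff.2 (range_nonempty _)) (0 : E)
  have hmin : ∀ c', q ∈ K c' → ∀ z ∈ K c', ‖q‖ ≤ ‖z‖ := fun c' _ z hz =>
    calc ‖q‖ = infDist 0 (K c) := by rw [hq, dist_zero_left]
      _ ≤ infDist 0 (K c') := hc c'
      _ ≤ ‖z‖ := by simpa using infDist_le_dist_of_mem (x := 0) hz
  have hsupp : ∀ c', q ∈ K c' → ∀ z ∈ K c', ‖q‖ ^ 2 ≤ ⟪q, z⟫ := fun c' hqc' _ hz =>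
    norm_sq_le_inner_of_forall_norm_le (convex_convexHull ℝ _) hqc' (hmin c' hqc') hz
  by_contra h0
  have hq0 : q ≠ 0 := by rintro rfl; exact h0 ⟨c, hqK⟩
  set ℓ : Dual ℝ E := innerₗ E q
  have hℓ : ℓ ≠ 0 := fun h => hq0 (inner_self_eq_zero.1 (LinearMap.congr_fun h q))
  obtain ⟨S, hS, hqS⟩ := exists_finset_card_le_finrank_mem_convexHull_image (𝕜 := ℝ) hℓ
    (fun i => hsupp c hqK _ (subset_convexHull ℝ _ (mem_range_self i))) hqK
    (real_inner_self_eq_norm_sq q)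
  obtain ⟨i₀, -, hi₀⟩ := exists_mem_notMem_of_card_lt_card (t := univ) (hS.trans_lt hι)
  obtain ⟨_, ⟨j, rfl⟩, hj⟩ :=
    (ℓ.concaveOn convex_univ).exists_le_of_mem_convexHull (subset_univ _) (hf i₀)
  set c' := Function.update c i₀ j
  have hsub : (fun i => f i (c i)) '' S ⊆ range fun i => f i (c' i) := by
    rintro _ ⟨i, hi, rfl⟩
    exact ⟨i, by simp [c', Function.update_of_ne (ne_of_mem_of_not_mem hi hi₀)]⟩
  have hqK' : q ∈ K c' := convexHull_mono hsub hqS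
  have hjK' : f i₀ j ∈ K c' := subset_convexHull ℝ _ ⟨i₀, by simp [c']⟩
  have hqj : ‖q‖ ^ 2 ≤ ⟪q, f i₀ j⟫ := hsupp c' hqK' _ hjK'
  simp only [ℓ, innerₗ_apply_apply, map_zero] at hj
  linarith [pow_pos (norm_pos_iff.2 hq0) 2]

end Colorful

lemma exists_weights_of_mem_convexHull_range {ι E : Type*} [Fintype ι] [AddCommGroup E]
    [Module ℝ E] {v : ι → E} {p : E} (hp : p ∈ convexHull ℝ (range v)) :
    ∃ w : ι → ℝ, (∀ i, 0 ≤ w i) ∧ ∑ i, w i = 1 ∧ ∑ i, w i • v i = p := by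
  classical
  rw [convexHull_range_eq_exists_affineCombination] at hp
  obtain ⟨s, w, hw0, hw1, rfl⟩ := hp
  refine ⟨fun i => if i ∈ s then w i else 0, fun i => ?_, ?_, ?_⟩
  · by_cases hi : i ∈ s
    · simpa [hi] using hw0 i hi
    · simp [hi]
  · simpa [sum_ite_mem] using hw1
  · simp [ite_smul, sum_ite_mem, s.affineCombination_eq_linear_combination _ _ hw1]

lemma zero_mem_convexHull_range_of_sum_eq_zero {κ E : Type*} [Fintype κ] [Nonempty κ]
    [AddCommGroup E] [Module ℝ E] {v : κ → E} (hv : ∑ j, v j = 0) :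
    (0 : E) ∈ convexHull ℝ (range v) := by
  have hcard : (0 : ℝ) < Fintype.card κ := Nat.cast_pos.2 Fintype.card_pos
  refine mem_convexHull_of_exists_fintype (fun _ => (Fintype.card κ : ℝ)⁻¹) v
    (fun _ => (inv_pos.2 hcard).le) ?_ (mem_range_self) ?_
  · simp [hcard.ne']
  · simp [← smul_sum, hv]

section Sarkaria

variable {ι κ σ : Type*} [DecidableEq κ] (j₀ : κ)

/-- The vectors `e_j` (`j ≠ j₀`) and `-∑ k, e_k` (`j = j₀`) of `ℝ^{κ \ {j₀}}`; their only linear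
relations are the multiples of `∑ j, sarkariaVec j₀ j = 0`. -/
def sarkariaVec (j : κ) (k : {k // k ≠ j₀}) : ℝ :=
  (if j = k then 1 else 0) - (if j = j₀ then 1 else 0)

/-- `sarkariaVec j₀ j ⊗ (1, x i)`, the coordinate `none` of `Option σ` carrying the `1`. -/
def sarkariaLift (x : ι → EuclideanSpace ℝ σ) (i : ι) (j : κ) :
    EuclideanSpace ℝ ({k // k ≠ j₀} × Option σ) :=
  WithLp.toLp 2 fun p => sarkariaVec j₀ j p.1 * p.2.elim 1 (x i)

lemma sarkariaLift_apply (x : ι → EuclideanSpace ℝ σ) (i : ι) (j : κ) (k : {k // k ≠ j₀})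
    (m : Option σ) : sarkariaLift j₀ x i j (k, m) = sarkariaVec j₀ j k * m.elim 1 (x i) :=
  rfl

lemma sum_sarkariaLift [Fintype κ] (x : ι → EuclideanSpace ℝ σ) (i : ι) :
    ∑ j, sarkariaLift j₀ x i j = 0 := by
  ext ⟨k, m⟩
  simp [sarkariaLift_apply, sarkariaVec, sub_mul, sum_sub_distrib, ite_mul]

lemma sum_fiber_eq_of_sum_smul_sarkariaLift_eq_zero [Fintype ι] (x : ι → EuclideanSpace ℝ σ)
    {c : ι → κ} {W : ι → ℝ} (hW : ∑ i, W i • sarkariaLift j₀ x i (c i) = 0) (j : κ) (m : Option σ) :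
    ∑ i with c i = j, W i * m.elim 1 (x i) = ∑ i with c i = j₀, W i * m.elim 1 (x i) := by
  by_cases hj : j = j₀
  · rw [hj]
  have := congrArg (fun v => v (⟨j, hj⟩, m)) hW
  simp only [WithLp.ofLp_sum, WithLp.ofLp_smul, Finset.sum_apply, Pi.smul_apply,
    sarkariaLift_apply, sarkariaVec, smul_eq_mul] at this
  rw [sum_filter, sum_filter]
  simp only [mul_sub, sub_mul, sum_sub_distrib, mul_ite, ite_mul] at this
  simpa [sub_eq_zero] using this

end Sarkaria

theorem tverberg_partition {ι κ σ : Type*} [Fintype ι] [Fintype κ] [Nonempty κ]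
    [Fintype σ] (hι : (Fintype.card κ - 1) * (Fintype.card σ + 1) < Fintype.card ι)
    (x : ι → EuclideanSpace ℝ σ) :
    ∃ c : ι → κ, (⋂ j, convexHull ℝ (x '' (c ⁻¹' {j}))).Nonempty := by
  classical
  obtain ⟨j₀⟩ := ‹Nonempty κ›
  have hdim : finrank ℝ (EuclideanSpace ℝ ({k // k ≠ j₀} × Option σ)) < Fintype.card ι := by
    simpa [Fintype.card_subtype_compl] using hι
  obtain ⟨c, hc⟩ := colorful_caratheodory hdim (sarkariaLift j₀ x)
    fun i => zero_mem_convexHull_range_of_sum_eq_zero (sum_sarkariaLift j₀ x i)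
  obtain ⟨W, hW0, hW1, hW⟩ := exists_weights_of_mem_convexHull_range hc
  have hfib := sum_fiber_eq_of_sum_smul_sarkariaLift_eq_zero j₀ x hW
  set t := ∑ i with c i = j₀, W i
  have ht : ∀ j, ∑ i with c i = j, W i = t := by simpa using fun j => hfib j none
  set X := ∑ i with c i = j₀, W i • x i
  have hX : ∀ j, ∑ i with c i = j, W i • x i = X := fun j => by
    ext a
    simpa [X] using hfib j (some a)
  have htpos : 0 < t := by
    have : ∑ j : κ, ∑ i with c i = j, W i = 1 := (sum_fiberwise univ c W).trans hW1
    simp only [ht, sum_const, card_univ, nsmul_eq_mul] at this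
    exact pos_of_mul_pos_right (this ▸ one_pos) (Nat.cast_nonneg _)
  refine ⟨c, t⁻¹ • X, mem_iInter.2 fun j => ?_⟩
  have := centerMass_mem_convexHull {i | c i = j} (w := W) (z := x) (fun i _ => hW0 i)
    ((ht j).symm ▸ htpos) (fun i hi => mem_image_of_mem x (mem_filter.1 hi).2)
  rwa [centerMass, ht j, hX j] at this

theorem tverberg_general (r d : ℕ) (hr : 2 ≤ r)
    (x : Fin ((r - 1) * (d + 1) + 1) → EuclideanSpace ℝ (Fin d)) :
    ∃ A : Fin r → Set (Fin ((r - 1) * (d + 1) + 1)),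
      Pairwise (Function.onFun Disjoint A) ∧
      (⋃ j, A j) = Set.univ ∧
      (⋂ j, convexHull ℝ (x '' A j)).Nonempty := by
  have : Nonempty (Fin r) := ⟨⟨0, by omega⟩⟩
  obtain ⟨c, hc⟩ := tverberg_partition (κ := Fin r) (by simp) x
  exact ⟨fun j => c ⁻¹' {j}, pairwise_disjoint_fiber c,
    eq_univ_of_forall fun i => mem_iUnion.2 ⟨c i, rfl⟩, hc⟩

/-- **Tverberg's theorem** (1966). For `r ≥ 2`, `d ≥ 1` and `n = (r-1)(d+1)+1`,
any `n` points in `ℝ^d` can be partitioned into `r` pairwise disjoint sets covering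
all indices whose convex hulls have a common point. -/
theorem tverberg (r d : ℕ) (hr : 2 ≤ r) (hd : 1 ≤ d)
    (x : Fin ((r - 1) * (d + 1) + 1) → EuclideanSpace ℝ (Fin d)) :
    ∃ A : Fin r → Set (Fin ((r - 1) * (d + 1) + 1)),
      Pairwise (Function.onFun Disjoint A) ∧
      (⋃ j, A j) = Set.univ ∧
      (⋂ j, convexHull ℝ (x '' A j)).Nonempty :=
  tverberg_general r d hr x
end

section
/- Let d, r, m be positive integers with m ≥ (r-1)(d+1), and let P = conv{±e_1, …, ±e_m} be the m-dimensional cross polytope. Then for every linear map f : ℝ^m → ℝ^d there exist r pairwise disjoint nonempty antipodal-free subsets S_1, …, S_r of the vertex set V = {±e_i : 1 ≤ i ≤ m} such that the images f(conv S_1), …, f(conv S_r) have a common point. -/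
private lemma tcp_single_smul_inj {m : ℕ} {a b : ℝ} {i i' : Fin m} (ha : a ≠ 0)
    (h : a • EuclideanSpace.single i (1:ℝ) = b • EuclideanSpace.single i' (1:ℝ)) :
    i = i' ∧ a = b := by
  have h1 := congrArg (fun z : EuclideanSpace ℝ (Fin m) => z i) h
  by_cases hii : i = i'
  · subst hii
    refine ⟨rfl, ?_⟩
    simpa [EuclideanSpace.single_apply] using h1
  · exfalso
    apply ha
    simpa [EuclideanSpace.single_apply, hii] using h1

private def tcp_blk (d m : ℕ) (hm : 0 < m) (k : ℕ) (p : Fin (d+1)) : Fin m :=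
  ⟨(k * (d+1) + p.val) % m, Nat.mod_lt _ hm⟩

private lemma tcp_aux_lt {d : ℕ} (k : ℕ) (p : Fin (d+1)) :
    k * (d+1) + p.val < (k+1) * (d+1) := by
  have hp := p.isLt
  have : (k+1) * (d+1) = k * (d+1) + (d+1) := by ring
  omega

private lemma tcp_blk_val {d m : ℕ} (hm : 0 < m) {k : ℕ} {p : Fin (d+1)}
    (h : k * (d+1) + p.val < m) : (tcp_blk d m hm k p).val = k * (d+1) + p.val :=
  Nat.mod_eq_of_lt h

private lemma tcp_blk_inj {d m : ℕ} (hm : 0 < m) {k k' : ℕ} {p q : Fin (d+1)}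
    (hk : (k+1) * (d+1) ≤ m) (hk' : (k'+1) * (d+1) ≤ m)
    (h : tcp_blk d m hm k p = tcp_blk d m hm k' q) : k = k' ∧ p = q := by
  have h1 : k * (d+1) + p.val < m := lt_of_lt_of_le (tcp_aux_lt k p) hk
  have h2 : k' * (d+1) + q.val < m := lt_of_lt_of_le (tcp_aux_lt k' q) hk'
  have hv : k * (d+1) + p.val = k' * (d+1) + q.val := by
    have hv0 := congrArg Fin.val h
    rwa [tcp_blk_val hm h1, tcp_blk_val hm h2] at hv0
  have hkk : k = k' := by
    rcases lt_trichotomy k k' with hlt | he | hgt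
    · have hle : (k+1) * (d+1) ≤ k' * (d+1) := Nat.mul_le_mul_right _ hlt
      have := tcp_aux_lt k p
      omega
    · exact he
    · have hle : (k'+1) * (d+1) ≤ k * (d+1) := Nat.mul_le_mul_right _ hgt
      have := tcp_aux_lt k' q
      omega
  subst hkk
  refine ⟨rfl, Fin.ext ?_⟩
  omega

/-- Tverberg's theorem for the cross polytope with linear maps: if `m ≥ (r-1)(d+1)` and
`P = conv{±e_1, …, ±e_m}` is the `m`-dimensional cross polytope, then for every linear map
`f : ℝ^m → ℝ^d` there are `r` pairwise disjoint nonempty antipodal-free subsets of the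
vertex set whose convex hulls have intersecting images under `f`. -/
theorem tverberg_cross_polytope_linear (d r m : ℕ) (hd : 0 < d) (hr : 0 < r) (hm : 0 < m)
    (hdim : (r - 1) * (d + 1) ≤ m)
    (f : EuclideanSpace ℝ (Fin m) →ₗ[ℝ] EuclideanSpace ℝ (Fin d)) :
    ∃ S : Fin r → Set (EuclideanSpace ℝ (Fin m)),
      (∀ j, (S j).Nonempty) ∧
      (∀ j, S j ⊆ {v | ∃ i : Fin m,
        v = EuclideanSpace.single i (1 : ℝ) ∨ v = -EuclideanSpace.single i (1 : ℝ)}) ∧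
      (∀ j, ∀ v ∈ S j, -v ∉ S j) ∧
      Pairwise (Function.onFun Disjoint S) ∧
      (⋂ j, f '' convexHull ℝ (S j)).Nonempty := by
  classical
  rcases Nat.lt_or_ge r 2 with hr1 | hr2
  · -- case r = 1
    have hr1' : r = 1 := by omega
    subst hr1'
    refine ⟨fun _ => {EuclideanSpace.single ⟨0, hm⟩ (1:ℝ)}, ?_, ?_, ?_, ?_, ?_⟩
    · intro j; exact ⟨_, rfl⟩
    · intro j v hv
      rw [Set.mem_singleton_iff] at hv
      exact ⟨⟨0, hm⟩, Or.inl hv⟩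
    · intro j v hv hneg
      rw [Set.mem_singleton_iff] at hv hneg
      subst hv
      have h1 := congrArg (fun z : EuclideanSpace ℝ (Fin m) => z ⟨0, hm⟩) hneg
      simp [EuclideanSpace.single_apply] at h1
      norm_num at h1
    · intro j j' hne
      exact absurd (Subsingleton.elim j j') hne
    · refine ⟨f (EuclideanSpace.single ⟨0, hm⟩ (1:ℝ)), ?_⟩
      rw [Set.mem_iInter]
      intro j
      exact ⟨_, subset_convexHull ℝ _ rfl, rfl⟩
  · -- case r ≥ 2
    have hR : 0 < r - 1 := by omega
    have hblkle : ∀ k : ℕ, k < r - 1 → (k+1) * (d+1) ≤ m := fun k hk =>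
      le_trans (Nat.mul_le_mul_right _ (by omega)) hdim
    -- linear dependence on every block of `d+1` coordinates
    have hdep : ∀ k : Fin (r-1), ∃ c : Fin (d+1) → ℝ,
        (∑ p, c p • f (EuclideanSpace.single (tcp_blk d m hm k.val p) 1) = 0) ∧
        ∃ p, c p ≠ 0 := by
      intro k
      have hli : ¬ LinearIndependent ℝ
          (fun p : Fin (d+1) => f (EuclideanSpace.single (tcp_blk d m hm k.val p) 1)) := by
        intro h
        have hcard := h.fintype_card_le_finrank
        rw [finrank_euclideanSpace_fin, Fintype.card_fin] at hcard
        omega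
      exact Fintype.not_linearIndependent_iff.mp hli
    choose C hC0 hC1 using hdep
    -- the sign function
    set sgn : ℝ → ℝ := fun t => if 0 < t then 1 else -1 with hsgn_def
    have hsgn_ne : ∀ t, sgn t ≠ 0 := by
      intro t; by_cases h : 0 < t <;> simp [hsgn_def, h]
    have hsgn_pm : ∀ t, sgn t = 1 ∨ sgn t = -1 := by
      intro t; by_cases h : 0 < t <;> simp [hsgn_def, h]
    have habs : ∀ t : ℝ, |t| * sgn t = t := by
      intro t
      by_cases h : 0 < t
      · simp [hsgn_def, h, abs_of_pos h]
      · push_neg at h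
        simp [hsgn_def, not_lt.mpr h, abs_of_nonpos h]
    -- the signed vertices and vertex sets
    set vert : ℝ → Fin (r-1) → Fin (d+1) → EuclideanSpace ℝ (Fin m) := fun e k p =>
      (e * sgn (C k p)) • EuclideanSpace.single (tcp_blk d m hm k.val p) 1 with hvert_def
    set vS : ℝ → Fin (r-1) → Set (EuclideanSpace ℝ (Fin m)) := fun e k =>
      {v | ∃ p, C k p ≠ 0 ∧ v = vert e k p} with hvS_def
    have hscal_ne : ∀ (e : ℝ), (e = 1 ∨ e = -1) → ∀ k p, e * sgn (C k p) ≠ 0 := by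
      intro e he k p
      have : e ≠ 0 := by rcases he with rfl | rfl <;> norm_num
      exact mul_ne_zero this (hsgn_ne _)
    -- membership analysis: two equal signed vertices have equal data
    have hkey : ∀ (e e' : ℝ), (e = 1 ∨ e = -1) → (e' = 1 ∨ e' = -1) →
        ∀ k k' p q, vert e k p = vert e' k' q → k = k' ∧ p = q ∧ e = e' := by
      intro e e' he he' k k' p q hEq
      rw [hvert_def] at hEq
      obtain ⟨hbe, hae⟩ := tcp_single_smul_inj (hscal_ne e he k p) hEq
      obtain ⟨hkk, hpq⟩ := tcp_blk_inj hm (hblkle k.val k.isLt) (hblkle k'.val k'.isLt) hbe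
      have hkk' : k = k' := Fin.ext hkk
      subst hkk'; subst hpq
      exact ⟨rfl, rfl, mul_right_cancel₀ (hsgn_ne _) hae⟩
    -- nonemptiness
    have hne : ∀ e k, (vS e k).Nonempty := by
      intro e k
      obtain ⟨p, hp⟩ := hC1 k
      exact ⟨vert e k p, ⟨p, hp, rfl⟩⟩
    -- subset of the vertex set
    have hsub : ∀ (e : ℝ), (e = 1 ∨ e = -1) → ∀ k, ∀ v ∈ vS e k,
        ∃ i : Fin m, v = EuclideanSpace.single i (1:ℝ) ∨
          v = -EuclideanSpace.single i (1:ℝ) := by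
      intro e he k v hv
      obtain ⟨p, _, rfl⟩ := hv
      refine ⟨tcp_blk d m hm k.val p, ?_⟩
      rcases he with rfl | rfl <;> rcases hsgn_pm (C k p) with hs | hs <;>
        rw [hvert_def] <;> simp [hs]
    -- antipodal-freeness
    have hanti : ∀ (e : ℝ), (e = 1 ∨ e = -1) → ∀ k, ∀ v ∈ vS e k, -v ∉ vS e k := by
      intro e he k v hv hnv
      obtain ⟨p, hp, rfl⟩ := hv
      obtain ⟨q, hq, heq⟩ := hnv
      have h1 : vert (-e) k p = vert e k q := by
        rw [← heq, hvert_def]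
        simp [neg_smul, neg_mul]
      have he' : -e = 1 ∨ -e = -1 := by rcases he with rfl | rfl <;> norm_num
      obtain ⟨-, -, hee⟩ := hkey (-e) e he' he k k p q h1
      have : e ≠ 0 := by rcases he with rfl | rfl <;> norm_num
      apply this
      linarith
    -- disjointness of distinct pieces
    have hdisj : ∀ (e e' : ℝ), (e = 1 ∨ e = -1) → (e' = 1 ∨ e' = -1) → ∀ k k',
        (k ≠ k' ∨ e ≠ e') → ∀ v, v ∈ vS e k → v ∈ vS e' k' → False := by
      intro e e' he he' k k' hne' v hv hv'
      obtain ⟨p, hp, rfl⟩ := hv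
      obtain ⟨q, hq, heq⟩ := hv'
      obtain ⟨hkk, -, hee⟩ := hkey e e' he he' k k' p q heq
      rcases hne' with h | h
      · exact h hkk
      · exact h hee
    -- the common point 0
    have hzero : ∀ (e : ℝ), (e = 1 ∨ e = -1) → ∀ k,
        (0 : EuclideanSpace ℝ (Fin d)) ∈ f '' convexHull ℝ (vS e k) := by
      intro e he k
      set T : Finset (Fin (d+1)) := Finset.univ.filter (fun p => C k p ≠ 0) with hT
      have hmemT : ∀ p, p ∈ T ↔ C k p ≠ 0 := by
        intro p; simp [hT]
      obtain ⟨p0, hp0⟩ := hC1 k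
      have hp0T : p0 ∈ T := (hmemT p0).mpr hp0
      set w : Fin (d+1) → ℝ := fun p => |C k p| with hw
      set x := T.centerMass w (fun p => vert e k p) with hx
      have hxhull : x ∈ convexHull ℝ (vS e k) := by
        rw [hx]
        apply Finset.centerMass_mem_convexHull
        · intro p _; exact abs_nonneg _
        · refine Finset.sum_pos' (fun i _ => abs_nonneg _) ⟨p0, hp0T, abs_pos.mpr hp0⟩
        · intro p hp
          exact ⟨p, (hmemT p).mp hp, rfl⟩
      refine ⟨x, hxhull, ?_⟩
      have hsumT : ∑ p ∈ T, C k p • f (EuclideanSpace.single (tcp_blk d m hm k.val p) 1)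
          = 0 := by
        rw [Finset.sum_subset (Finset.subset_univ T) ?_]
        · exact hC0 k
        · intro p _ hp
          have : C k p = 0 := by
            by_contra hne''
            exact hp ((hmemT p).mpr hne'')
          rw [this, zero_smul]
      rw [hx, Finset.centerMass, map_smul, map_sum]
      have hterm : ∀ p ∈ T, f (w p • vert e k p)
          = e • (C k p • f (EuclideanSpace.single (tcp_blk d m hm k.val p) 1)) := by
        intro p _
        rw [hvert_def, hw]
        simp only [map_smul, smul_smul]
        congr 1
        rw [show |C k p| * (e * sgn (C k p)) = e * (|C k p| * sgn (C k p)) by ring, habs]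
      rw [Finset.sum_congr rfl hterm, ← Finset.smul_sum, hsumT, smul_zero, smul_zero]
    -- assemble the pieces
    set S : Fin r → Set (EuclideanSpace ℝ (Fin m)) :=
      (fun j => if h : (j : ℕ) < r - 1 then vS 1 ⟨j, h⟩ else vS (-1) ⟨0, hR⟩) with hSdef
    have hSpos : ∀ (j : Fin r) (h : (j : ℕ) < r - 1), S j = vS 1 ⟨j, h⟩ := by
      intro j h; simp only [hSdef]; rw [dif_pos h]
    have hSneg : ∀ (j : Fin r), ¬((j : ℕ) < r - 1) → S j = vS (-1) ⟨0, hR⟩ := by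
      intro j h; simp only [hSdef]; rw [dif_neg h]
    refine ⟨S, ?_, ?_, ?_, ?_, ?_⟩
    · intro j
      by_cases h : (j : ℕ) < r - 1
      · rw [hSpos j h]; exact hne 1 _
      · rw [hSneg j h]; exact hne (-1) _
    · intro j v hv
      by_cases h : (j : ℕ) < r - 1
      · rw [hSpos j h] at hv; exact hsub 1 (Or.inl rfl) _ v hv
      · rw [hSneg j h] at hv; exact hsub (-1) (Or.inr rfl) _ v hv
    · intro j v hv
      by_cases h : (j : ℕ) < r - 1
      · rw [hSpos j h] at hv ⊢; exact hanti 1 (Or.inl rfl) _ v hv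
      · rw [hSneg j h] at hv ⊢; exact hanti (-1) (Or.inr rfl) _ v hv
    · intro j j' hjj'
      rw [Function.onFun, Set.disjoint_left]
      intro v hv hv'
      by_cases h : (j : ℕ) < r - 1 <;> by_cases h' : (j' : ℕ) < r - 1
      · rw [hSpos j h] at hv; rw [hSpos j' h'] at hv'
        refine hdisj 1 1 (Or.inl rfl) (Or.inl rfl) ⟨j, h⟩ ⟨j', h'⟩ (Or.inl ?_) v hv hv'
        intro hc
        have hval : (j : ℕ) = (j' : ℕ) := Fin.mk_eq_mk.mp hc
        exact hjj' (Fin.ext hval)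
      · rw [hSpos j h] at hv; rw [hSneg j' h'] at hv'
        exact hdisj 1 (-1) (Or.inl rfl) (Or.inr rfl) ⟨j, h⟩ ⟨0, hR⟩
          (Or.inr (by norm_num)) v hv hv'
      · rw [hSneg j h] at hv; rw [hSpos j' h'] at hv'
        exact hdisj (-1) 1 (Or.inr rfl) (Or.inl rfl) ⟨0, hR⟩ ⟨j', h'⟩
          (Or.inr (by norm_num)) v hv hv'
      · exfalso
        have h1 := j.isLt
        have h2 := j'.isLt
        exact hjj' (Fin.ext (by omega : (j : ℕ) = (j' : ℕ)))
    · refine ⟨0, ?_⟩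
      rw [Set.mem_iInter]
      intro j
      by_cases h : (j : ℕ) < r - 1
      · rw [hSpos j h]; exact hzero 1 (Or.inl rfl) ⟨j, h⟩
      · rw [hSneg j h]; exact hzero (-1) (Or.inr rfl) ⟨0, hR⟩
end

section
/- Let m, k be positive integers with m ≥ 2k, let t_1 < t_2 < ⋯ < t_n be distinct real numbers, let μ : ℝ → ℝ^m be the moment curve μ(t) = (t, t², …, t^m), and let P = conv{μ(t_1), …, μ(t_n)} be the corresponding cyclic polytope. Then P is k-neighborly: for every nonempty subset S ⊆ {t_1, …, t_n} with |S| ≤ k, the set conv{μ(t) : t ∈ S} is a face of P. -/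
/-!
For a finite set `A` of at most `m / 2` reals, `q = ∏_{a ∈ A} (X - a)²` has degree at most `m`, so
`q(s) - q(0) = ⟪c, μ(s)⟫` for the vector `c` of its higher coefficients. As `q ≥ 0` with zero set
`A`, the functional `-⟪c, ·⟫` is at most `q(0)` on the moment curve, with equality exactly on
`μ(A)`. The face of a convex hull on which a functional attains its maximum is the hull of the
generating points attaining it.
-/

open Finset Polynomial

section

variable {𝕜 E : Type*} [Field 𝕜] [LinearOrder 𝕜] [IsStrictOrderedRing 𝕜] [AddCommGroup E]
  [Module 𝕜 E] {F : Type*} [FunLike F E 𝕜] [LinearMapClass F 𝕜 E 𝕜] {V : Set E} {c : 𝕜}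

theorem convexHull_inter_hyperplane_of_le {l : F} (hV : ∀ v ∈ V, l v ≤ c) :
    convexHull 𝕜 V ∩ {x | l x = c} = convexHull 𝕜 {v ∈ V | l v = c} := by
  classical
  refine subset_antisymm ?_ fun x hx => ⟨convexHull_mono (fun v hv => hv.1) hx,
    convexHull_min (fun v hv => hv.2) (convex_hyperplane (l : E →ₗ[𝕜] 𝕜).isLinear c) hx⟩
  rintro x ⟨hx, hlx⟩
  rw [_root_.convexHull_eq, Set.mem_ofPred_eq] at hx
  obtain ⟨ι, s, w, z, hw₀, hw₁, hz, rfl⟩ := hx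
  have hslack : ∑ i ∈ s, w i * (c - l (z i)) = 0 := by
    rw [Set.mem_ofPred_eq, centerMass_eq_of_sum_1 _ _ hw₁, map_sum] at hlx
    simp only [map_smul, smul_eq_mul] at hlx
    simp only [mul_sub, sum_sub_distrib, ← sum_mul, hw₁, one_mul, hlx, sub_self]
  have hactive : ∀ i ∈ s, w i ≠ 0 → l (z i) = c := fun i hi hwi => by
    have := (sum_eq_zero_iff_of_nonneg fun j hj =>
      mul_nonneg (hw₀ j hj) (sub_nonneg.2 (hV _ (hz j hj)))).1 hslack i hi
    exact (sub_eq_zero.1 ((mul_eq_zero.1 this).resolve_left hwi)).symm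
  rw [← centerMass_filter_ne_zero]
  refine centerMass_mem_convexHull _ (fun i hi => hw₀ i (mem_filter.1 hi).1) ?_ fun i hi => ?_
  · rw [sum_filter_ne_zero, hw₁]; exact one_pos
  · obtain ⟨hi, hwi⟩ := mem_filter.1 hi
    exact ⟨hz i hi, hactive i hi hwi⟩

variable [TopologicalSpace 𝕜] [TopologicalSpace E]

theorem isExposed_convexHull_of_le (l : StrongDual 𝕜 E) (hV : ∀ v ∈ V, l v ≤ c) :
    IsExposed 𝕜 (convexHull 𝕜 V) (convexHull 𝕜 {v ∈ V | l v = c}) := by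
  rintro ⟨x₀, hx₀⟩
  have hx₀c : l x₀ = c :=
    convexHull_min (fun v hv => hv.2) (convex_hyperplane (l : E →ₗ[𝕜] 𝕜).isLinear c) hx₀
  have hle : ∀ y ∈ convexHull 𝕜 V, l y ≤ c :=
    fun y hy => convexHull_min hV (convex_halfSpace_le (l : E →ₗ[𝕜] 𝕜).isLinear c) hy
  refine ⟨l, ?_⟩
  rw [← convexHull_inter_hyperplane_of_le hV]
  ext x
  refine and_congr_right fun hx => ⟨fun hlx y hy => ?_, fun hmax => ?_⟩
  · exact (hle y hy).trans_eq hlx.symm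
  · exact le_antisymm (hle x hx) (hx₀c ▸ hmax x₀ (convexHull_mono (fun v hv => hv.1) hx₀))

end

noncomputable def momentCurve (m : ℕ) (s : ℝ) : EuclideanSpace ℝ (Fin m) :=
  WithLp.toLp 2 fun i => s ^ ((i : ℕ) + 1)

theorem exists_strongDual_momentCurve_eq_eval_sub {m : ℕ} {p : ℝ[X]} (hp : p.natDegree ≤ m) :
    ∃ l : StrongDual ℝ (EuclideanSpace ℝ (Fin m)),
      ∀ s, l (momentCurve m s) = p.eval s - p.eval 0 := by
  refine ⟨innerSL ℝ (WithLp.toLp 2 fun i : Fin m => p.coeff ((i : ℕ) + 1)), fun s => ?_⟩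
  rw [eval_eq_sum_range' (Nat.lt_succ_of_le hp), sum_range_succ', ← coeff_zero_eq_eval_zero]
  simp only [innerSL_apply_apply, PiLp.inner_apply, momentCurve, RCLike.inner_apply, conj_trivial,
    pow_zero, mul_one, add_sub_cancel_right, mul_comm (s ^ _)]
  exact Fin.sum_univ_eq_sum_range (fun i => p.coeff (i + 1) * s ^ (i + 1)) m

theorem eval_sq_prod_X_sub_C_eq_zero_iff {A : Finset ℝ} {s : ℝ} :
    ((∏ a ∈ A, (X - C a)) ^ 2).eval s = 0 ↔ s ∈ A := by
  simp [eval_prod, prod_eq_zero_iff, sub_eq_zero]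

theorem isExposed_convexHull_image_momentCurve {m : ℕ} {A : Finset ℝ} {T : Set ℝ} (hAT : ↑A ⊆ T)
    (hA : 2 * A.card ≤ m) :
    IsExposed ℝ (convexHull ℝ (momentCurve m '' T)) (convexHull ℝ (momentCurve m '' A)) := by
  set q : ℝ[X] := (∏ a ∈ A, (X - C a)) ^ 2
  have hq : q.natDegree ≤ m := by simpa [q, natDegree_pow, mul_comm] using hA
  obtain ⟨l, hl⟩ := exists_strongDual_momentCurve_eq_eval_sub hq
  have hface : {v ∈ momentCurve m '' T | (-l) v = q.eval 0} = momentCurve m '' A := by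
    ext v
    constructor
    · rintro ⟨⟨s, -, rfl⟩, hs⟩
      rw [neg_apply, hl, neg_sub, sub_eq_self] at hs
      exact ⟨s, eval_sq_prod_X_sub_C_eq_zero_iff.1 hs, rfl⟩
    · rintro ⟨s, hs, rfl⟩
      refine ⟨⟨s, hAT hs, rfl⟩, ?_⟩
      rw [neg_apply, hl, neg_sub, sub_eq_self]
      exact eval_sq_prod_X_sub_C_eq_zero_iff.2 hs
  rw [← hface]
  refine isExposed_convexHull_of_le (-l) ?_
  rintro _ ⟨s, -, rfl⟩
  have : 0 ≤ q.eval s := by simp only [q, eval_pow]; positivity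
  rw [neg_apply, hl]
  linarith

theorem cyclic_polytope_neighborly_general (m k n : ℕ) (hmk : 2 * k ≤ m)
    (t : Fin n → ℝ)
    (μ : ℝ → EuclideanSpace ℝ (Fin m))
    (hμ : ∀ s : ℝ, ∀ i : Fin m, μ s i = s ^ ((i : ℕ) + 1)) :
    ∀ S : Finset (Fin n), S.Nonempty → S.card ≤ k →
      IsExposed ℝ (convexHull ℝ (Set.range (μ ∘ t)))
        (convexHull ℝ (μ '' (t '' (S : Set (Fin n))))) := by
  intro S _ hSk
  obtain rfl : μ = momentCurve m := funext fun s => PiLp.ext (hμ s)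
  rw [Set.range_comp, ← coe_image]
  exact isExposed_convexHull_image_momentCurve (by rw [coe_image]; exact Set.image_subset_range t S)
    ((Nat.mul_le_mul_left 2 (card_image_le.trans hSk)).trans hmk)

/-- **Gale's theorem** on neighborliness of cyclic polytopes: for `m ≥ 2k`, the cyclic
polytope `P = conv{μ(t_1), …, μ(t_n)}` on the moment curve `μ(t) = (t, t², …, t^m)` in
`ℝ^m` is `k`-neighborly: the convex hull of every nonempty set of at most `k` of its
vertices is a face of `P`. -/
theorem cyclic_polytope_neighborly (m k n : ℕ) (hm : 0 < m) (hk : 0 < k) (hmk : 2 * k ≤ m)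
    (t : Fin n → ℝ) (ht : StrictMono t)
    (μ : ℝ → EuclideanSpace ℝ (Fin m))
    (hμ : ∀ s : ℝ, ∀ i : Fin m, μ s i = s ^ ((i : ℕ) + 1)) :
    ∀ S : Finset (Fin n), S.Nonempty → S.card ≤ k →
      IsExposed ℝ (convexHull ℝ (Set.range (μ ∘ t)))
        (convexHull ℝ (μ '' (t '' (S : Set (Fin n))))) :=
  cyclic_polytope_neighborly_general m k n hmk t μ hμ
end

section
/- Let r ≥ 1 and let P = conv V be a polytope in ℝ^N of dimension at least r, where V is exactly the set of extreme points (vertices) of P. Call two distinct vertices u, v ∈ V adjacent if the segment conv{u, v} is a face of P, and assume the 1-skeleton of P is triangle-free: no three distinct vertices are pairwise adjacent. Then for every function f : ℝ^N → ℝ continuous on P there exist r pairwise disjoint faces F_1, …, F_r of P whose images f(F_1), …, f(F_r) have a common point. -/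
open Finset Module Filter Topology

/-!
Let `G` be the skeleton of `P` and `d = dim P ≥ r`. The simplex method shows that from every
vertex one can ascend along edges to the face maximizing a given functional; choosing a functional
constant on a deleted set `C` with `#C < d` this yields Balinski's theorem that `G - C` is
connected. Hence every vertex has at least `d` neighbours, and since adjacent vertices of a
triangle-free graph have disjoint neighbourhoods, `P` has at least `2 d` vertices.

Let `c` be the `r`-th smallest value of `f` on the vertices. Match each vertex on level `c` to
itself and each vertex below `c` to a neighbour above `c`. By the deficiency version of Hall's
theorem, either `r` disjoint such vertices and edges exist, and they are disjoint faces whose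
images contain `c` by the intermediate value theorem, or fewer than `r` vertices, among them the
whole level `c`, meet every edge crossing `c`; deleting them contradicts Balinski's theorem,
since fewer than `r` vertices lie below `c` and at least `2 d` in total.
-/

variable {E : Type*} [NormedAddCommGroup E] [NormedSpace ℝ E]

noncomputable def maxVerts (V : Finset E) (l : E →L[ℝ] ℝ) : Finset E :=
  {v ∈ V | ∀ u ∈ V, l u ≤ l v}

section maxVerts

variable {V : Finset E} {l : E →L[ℝ] ℝ} {u v : E}

@[simp]
lemma mem_maxVerts : v ∈ maxVerts V l ↔ v ∈ V ∧ ∀ u ∈ V, l u ≤ l v := mem_filter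

lemma maxVerts_subset : maxVerts V l ⊆ V := filter_subset _ _

lemma maxVerts_nonempty (hV : V.Nonempty) : (maxVerts V l).Nonempty := by
  obtain ⟨v, hv, hmax⟩ := V.exists_max_image l hV
  exact ⟨v, mem_maxVerts.2 ⟨hv, hmax⟩⟩

lemma apply_le_of_mem_maxVerts (hv : v ∈ maxVerts V l) {x : E} (hx : x ∈ convexHull ℝ (V : Set E)) :
    l x ≤ l v :=
  convexHull_min (fun u hu => (mem_maxVerts.1 hv).2 u hu)
    (convex_halfSpace_le l.toLinearMap.isLinear (l v)) hx

lemma convexHull_maxVerts (V : Finset E) (l : E →L[ℝ] ℝ) :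
    convexHull ℝ (maxVerts V l : Set E) = l.toExposed (convexHull ℝ (V : Set E)) := by
  refine subset_antisymm (convexHull_min (fun v hv => ⟨subset_convexHull ℝ _ (maxVerts_subset hv),
    fun y hy => apply_le_of_mem_maxVerts hv hy⟩)
    (ContinuousLinearMap.toExposed.isExposed.convex (convex_convexHull ℝ _))) ?_
  rintro x ⟨hxV, hmax⟩
  obtain ⟨w, hw₀, hw₁, rfl⟩ := Finset.mem_convexHull'.1 hxV
  have hvert : ∀ y ∈ V, l y ≤ l (∑ z ∈ V, w z • z) := fun y hy => hmax y (subset_convexHull ℝ _ hy)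
  -- `l x` is a weighted average of the values `l y`, so only maximizers carry weight
  have hzero : ∀ y ∈ V, y ∉ maxVerts V l → w y = 0 := by
    have hsum : ∑ y ∈ V, w y * (l (∑ z ∈ V, w z • z) - l y) = 0 := by
      simp only [mul_sub, sum_sub_distrib, ← sum_mul, hw₁, one_mul, map_sum, map_smul, smul_eq_mul,
        sub_self]
    intro y hy hyF
    refine ((sum_eq_zero_iff_of_nonneg fun z hz => mul_nonneg (hw₀ z hz)
      (sub_nonneg.2 (hvert z hz))).1 hsum y hy |> mul_eq_zero.1).resolve_right fun h => hyF ?_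
    exact mem_maxVerts.2 ⟨hy, fun u hu => (hvert u hu).trans (sub_eq_zero.1 h).le⟩
  refine Finset.mem_convexHull'.2 ⟨w, fun y hy => hw₀ y (maxVerts_subset hy), ?_, ?_⟩
  · rw [← hw₁]
    exact sum_subset maxVerts_subset hzero
  · exact sum_subset maxVerts_subset fun y hy hyF => by simp [hzero y hy hyF]

lemma isExposed_convexHull_maxVerts (V : Finset E) (l : E →L[ℝ] ℝ) :
    IsExposed ℝ (convexHull ℝ (V : Set E)) (convexHull ℝ (maxVerts V l : Set E)) := by
  rw [convexHull_maxVerts]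
  exact ContinuousLinearMap.toExposed.isExposed

lemma disjoint_convexHull_maxVerts {l₁ l₂ : E →L[ℝ] ℝ}
    (h : Disjoint (maxVerts V l₁) (maxVerts V l₂)) :
    Disjoint (convexHull ℝ (maxVerts V l₁ : Set E)) (convexHull ℝ (maxVerts V l₂ : Set E)) := by
  rw [Set.disjoint_left]
  intro x hx₁ hx₂
  rw [convexHull_maxVerts] at hx₁ hx₂
  -- a common point maximizes `l₁ + l₂`, so some vertex does, and that vertex maximizes both
  have hx : x ∈ convexHull ℝ (maxVerts V (l₁ + l₂) : Set E) := by
    rw [convexHull_maxVerts]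
    exact ⟨hx₁.1, fun y hy => add_le_add (hx₁.2 y hy) (hx₂.2 y hy)⟩
  obtain ⟨w, hw⟩ : (maxVerts V (l₁ + l₂)).Nonempty := by
    by_contra hempty
    simp [not_nonempty_iff_eq_empty.1 hempty] at hx
  have hwV : w ∈ convexHull ℝ (V : Set E) := subset_convexHull ℝ _ (maxVerts_subset hw)
  have hxw : l₁ x + l₂ x ≤ l₁ w + l₂ w := apply_le_of_mem_maxVerts hw hx₁.1
  have h₁ : l₁ w = l₁ x := by linarith [hx₁.2 w hwV, hx₂.2 w hwV]
  have h₂ : l₂ w = l₂ x := by linarith [hx₁.2 w hwV, hx₂.2 w hwV]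
  refine disjoint_left.1 h (mem_maxVerts.2 ⟨maxVerts_subset hw, fun u hu => ?_⟩)
    (mem_maxVerts.2 ⟨maxVerts_subset hw, fun u hu => ?_⟩)
  · rw [h₁]; exact hx₁.2 u (subset_convexHull ℝ _ hu)
  · rw [h₂]; exact hx₂.2 u (subset_convexHull ℝ _ hu)

lemma apply_eq_of_mem_maxVerts (hu : u ∈ maxVerts V l) (hv : v ∈ maxVerts V l) : l u = l v :=
  le_antisymm ((mem_maxVerts.1 hv).2 u (mem_maxVerts.1 hu).1)
    ((mem_maxVerts.1 hu).2 v (mem_maxVerts.1 hv).1)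

lemma exists_maxVerts_eq_maxVerts (V : Finset E) (g e : E →L[ℝ] ℝ) :
    ∃ l : E →L[ℝ] ℝ, maxVerts V l = maxVerts (maxVerts V g) e := by
  have hgap : ∀ x ∈ V, x ∉ maxVerts V g → ∀ y ∈ maxVerts V g, g x < g y := by
    intro x hxV hxF y hy
    obtain ⟨z, hzV, hz⟩ : ∃ z ∈ V, g x < g z := by simpa [hxV] using hxF
    exact hz.trans_le ((mem_maxVerts.1 hy).2 z hzV)
  have hK : ∀ᶠ K : ℝ in atTop, ∀ x ∈ V, x ∉ maxVerts V g → ∀ y ∈ maxVerts V g,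
      K * g x + e x < K * g y + e y := by
    simp only [eventually_all_finset, eventually_imp_distrib_left]
    intro x hxV hxF y hy
    filter_upwards [(tendsto_id.atTop_mul_const (sub_pos.2 (hgap x hxV hxF y hy)))
      |>.eventually_gt_atTop (e x - e y)] with K hK
    simp only [id] at hK
    linarith
  obtain ⟨K, hK⟩ := hK.exists
  refine ⟨K • g + e, ext fun x => ?_⟩
  rw [mem_maxVerts, mem_maxVerts]
  simp only [add_apply, smul_apply, smul_eq_mul]
  constructor
  · rintro ⟨hxV, hxmax⟩
    have hxF : x ∈ maxVerts V g := by
      by_contra hxF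
      obtain ⟨y, hy⟩ := maxVerts_nonempty (l := g) ⟨x, hxV⟩
      exact (hK x hxV hxF y hy).not_ge (hxmax y (maxVerts_subset hy))
    refine ⟨hxF, fun u hu => ?_⟩
    have := hxmax u (maxVerts_subset hu)
    rw [apply_eq_of_mem_maxVerts hu hxF] at this
    linarith
  · rintro ⟨hxF, hxmax⟩
    refine ⟨maxVerts_subset hxF, fun u hu => ?_⟩
    by_cases huF : u ∈ maxVerts V g
    · rw [apply_eq_of_mem_maxVerts huF hxF]
      linarith [hxmax u huF]
    · exact (hK u hu huF x hxF).le

end maxVerts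

section ConvexIndependent

variable {V : Finset E} {v : E}

lemma ConvexIndependent.exists_forall_ne_lt (hV : ConvexIndependent ℝ ((↑) : ↥(V : Set E) → E))
    (hv : v ∈ V) : ∃ h : E →L[ℝ] ℝ, ∀ u ∈ V, u ≠ v → h u < h v := by
  have hnot : v ∉ convexHull ℝ ((V : Set E) \ {v}) :=
    convexIndependent_set_iff_notMem_convexHull_sdiff.1 hV v hv
  obtain ⟨h, t, hlt, hgt⟩ := geometric_hahn_banach_closed_point (convex_convexHull ℝ _)
    (V.finite_toSet.sdiff.isCompact_convexHull (𝕜 := ℝ)).isClosed hnot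
  exact ⟨h, fun u hu huv => (hlt u (subset_convexHull ℝ _ ⟨hu, huv⟩)).trans hgt⟩

lemma ConvexIndependent.smul_sub_ne_smul_sub (hV : ConvexIndependent ℝ ((↑) : ↥(V : Set E) → E))
    (hv : v ∈ V) {p q : E} (hp : p ∈ V) (hq : q ∈ V) (hpq : p ≠ q) (hpv : p ≠ v) (hqv : q ≠ v)
    {a b : ℝ} (ha : 0 < a) (hb : 0 < b) : a • (p - v) ≠ b • (q - v) := by
  wlog hab : a ≤ b generalizing p q a b
  · exact fun h => this hq hp hpq.symm hqv hpv hb ha (le_of_not_ge hab) h.symm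
  intro h
  have hq' : q = v + (a / b) • (p - v) := by
    rw [div_eq_inv_mul, mul_smul, h, smul_smul, inv_mul_cancel₀ hb.ne', one_smul, add_sub_cancel]
  have hseg : q ∈ convexHull ℝ {v, p} := by
    rw [convexHull_pair, segment_eq_image']
    exact ⟨a / b, ⟨by positivity, (div_le_one hb).2 hab⟩, hq'.symm⟩
  have := convexIndependent_set_iff_inter_convexHull_subset.1 hV {v, p}
    (Set.insert_subset hv (Set.singleton_subset_iff.2 hp)) ⟨hq, hseg⟩
  rcases this with h' | h'
  · exact hqv h'
  · exact hpq (Set.mem_singleton_iff.1 h').symm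

end ConvexIndependent

noncomputable def skeleton (V : Finset E) : SimpleGraph E where
  Adj u v := u ≠ v ∧ ∃ l : E →L[ℝ] ℝ, (maxVerts V l : Set E) = {u, v}
  symm := ⟨fun _ _ ⟨hne, l, hl⟩ => ⟨hne.symm, l, by rw [hl, Set.pair_comm]⟩⟩
  loopless := ⟨fun _ h => h.1 rfl⟩

section skeleton

variable {V : Finset E} {u v : E}

lemma skeleton_adj :
    (skeleton V).Adj u v ↔ u ≠ v ∧ ∃ l : E →L[ℝ] ℝ, (maxVerts V l : Set E) = {u, v} :=
  Iff.rfl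

lemma mem_of_skeleton_adj (h : (skeleton V).Adj u v) : u ∈ V := by
  obtain ⟨-, l, hl⟩ := skeleton_adj.1 h
  exact maxVerts_subset (l := l) (by simp [← mem_coe, hl])

lemma isExposed_of_skeleton_adj (h : (skeleton V).Adj u v) :
    IsExposed ℝ (convexHull ℝ (V : Set E)) (convexHull ℝ {u, v}) := by
  obtain ⟨-, l, hl⟩ := skeleton_adj.1 h
  rw [← hl]
  exact isExposed_convexHull_maxVerts V l

lemma skeleton_maxVerts_le (V : Finset E) (g : E →L[ℝ] ℝ) : skeleton (maxVerts V g) ≤ skeleton V :=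
  fun _ _ hadj =>
    let ⟨hne, e, he⟩ := skeleton_adj.1 hadj
    let ⟨l, hl⟩ := exists_maxVerts_eq_maxVerts V g e
    skeleton_adj.2 ⟨hne, l, by rw [hl, he]⟩

lemma exists_maxVerts_eq_pair (hV : ConvexIndependent ℝ ((↑) : ↥(V : Set E) → E)) (hu : u ∈ V)
    (h : u = v ∨ (skeleton V).Adj u v) : ∃ l : E →L[ℝ] ℝ, (maxVerts V l : Set E) = {u, v} := by
  rcases h with rfl | h
  · obtain ⟨l, hl⟩ := hV.exists_forall_ne_lt hu
    refine ⟨l, Set.ext fun w => ?_⟩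
    simp only [mem_coe, mem_maxVerts, Set.mem_insert_iff, Set.mem_singleton_iff, or_self]
    refine ⟨fun ⟨hw, hwmax⟩ => by_contra fun hne => (hl w hw hne).not_ge (hwmax u hu), ?_⟩
    rintro rfl
    exact ⟨hu, fun x hx => (eq_or_ne x w).elim (fun h => h ▸ le_rfl) fun h => (hl x hx h).le⟩
  · exact (skeleton_adj.1 h).2

lemma skeleton_cliqueFree_three
    (h : ¬ ∃ u ∈ V, ∃ v ∈ V, ∃ w ∈ V, u ≠ v ∧ u ≠ w ∧ v ≠ w ∧
      IsExposed ℝ (convexHull ℝ (V : Set E)) (convexHull ℝ {u, v}) ∧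
      IsExposed ℝ (convexHull ℝ (V : Set E)) (convexHull ℝ {u, w}) ∧
      IsExposed ℝ (convexHull ℝ (V : Set E)) (convexHull ℝ {v, w})) :
    (skeleton V).CliqueFree 3 := fun t ht => by
  classical
  obtain ⟨u, v, w, huv, huw, hvw, -⟩ := SimpleGraph.is3Clique_iff.1 ht
  exact h ⟨u, mem_of_skeleton_adj huv, v, mem_of_skeleton_adj huv.symm, w,
    mem_of_skeleton_adj huw.symm, huv.ne, huw.ne, hvw.ne, isExposed_of_skeleton_adj huv,
    isExposed_of_skeleton_adj huw, isExposed_of_skeleton_adj hvw⟩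

/-- The ratio test of the simplex method: tilt `h` towards `l` until a second vertex ties
with `v`. -/
lemma exists_skeleton_adj_of_injOn {h l : E →L[ℝ] ℝ} (hv : v ∈ V)
    (hh : ∀ u ∈ V, u ≠ v → h u < h v) (hl : ∃ u ∈ V, l v < l u)
    (hinj : Set.InjOn (fun u => (h v - h u) / (l u - l v)) ↑({u ∈ V | l v < l u} : Finset E)) :
    ∃ w, (skeleton V).Adj v w ∧ l v < l w := by
  set R : E → ℝ := fun u => (h v - h u) / (l u - l v)
  obtain ⟨w, hwU, hwmin⟩ := ({u ∈ V | l v < l u} : Finset E).exists_min_image R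
    (by simpa [filter_nonempty_iff] using hl)
  obtain ⟨hwV, hlw⟩ := mem_filter.1 hwU
  have hR : ∀ u, l v < l u → h v - h u = R u * (l u - l v) := fun u hu =>
    (div_mul_cancel₀ _ (sub_pos.2 hu).ne').symm
  have hwv : w ≠ v := fun h => (h ▸ hlw).false
  have hs : 0 < R w := div_pos (sub_pos.2 (hh w hwV hwv)) (sub_pos.2 hlw)
  set g := h + R w • l
  have hg : ∀ u, g u = h u + R w * l u := fun u => rfl
  have hgw : g w = g v := by rw [hg, hg]; linarith [hR w hlw]
  have hgle : ∀ u ∈ V, g u ≤ g v ∧ (g u = g v → u = v ∨ u = w) := by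
    intro u hu
    rcases eq_or_ne u v with rfl | huv
    · simp
    rcases lt_or_ge (l v) (l u) with hlu | hlu
    · have huU : u ∈ ({u ∈ V | l v < l u} : Finset E) := mem_filter.2 ⟨hu, hlu⟩
      have hRu := hwmin u huU
      have hgap : g v - g u = (R u - R w) * (l u - l v) := by
        rw [hg, hg]
        linear_combination hR u hlu
      refine ⟨by nlinarith [sub_pos.2 hlu], fun heq => Or.inr (hinj huU hwU ?_)⟩
      have : (R u - R w) * (l u - l v) = 0 := by rw [← hgap, heq, sub_self]
      exact sub_eq_zero.1 ((mul_eq_zero.1 this).resolve_right (sub_pos.2 hlu).ne')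
    · have hhu := hh u hu huv
      have hRl : R w * l u ≤ R w * l v := mul_le_mul_of_nonneg_left hlu hs.le
      exact ⟨by rw [hg, hg]; linarith, fun heq => by rw [hg, hg] at heq; linarith⟩
  refine ⟨w, skeleton_adj.2 ⟨hwv.symm, g, Set.ext fun u => ?_⟩, hlw⟩
  simp only [mem_coe, mem_maxVerts, Set.mem_insert_iff, Set.mem_singleton_iff]
  constructor
  · rintro ⟨hu, humax⟩
    exact (hgle u hu).2 (le_antisymm (hgle u hu).1 (humax v hv))
  · rintro (rfl | rfl)
    · exact ⟨hv, fun x hx => (hgle x hx).1⟩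
    · exact ⟨hwV, fun x hx => (hgle x hx).1.trans hgw.symm.le⟩

end skeleton

section simplex

variable {V : Finset E} {v : E}

lemma eventually_forall_ne_lt_add_smul {h : E →L[ℝ] ℝ} (hh : ∀ u ∈ V, u ≠ v → h u < h v)
    (m : E →L[ℝ] ℝ) : ∀ᶠ ε : ℝ in 𝓝 0, ∀ u ∈ V, u ≠ v → (h + ε • m) u < (h + ε • m) v := by
  simp only [eventually_all_finset, eventually_imp_distrib_left]
  intro u _ huv
  refine ContinuousAt.eventually_lt (by fun_prop) (by fun_prop) ?_
  simpa using hh u ‹_› huv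

lemma eventually_injOn_ratio (h l m : E →L[ℝ] ℝ)
    (hm : ∀ p ∈ V, ∀ q ∈ V, l v < l p → l v < l q → p ≠ q →
      m ((l q - l v) • (v - p) - (l p - l v) • (v - q)) ≠ 0) :
    ∀ᶠ ε : ℝ in 𝓝[≠] 0, Set.InjOn (fun u => ((h + ε • m) v - (h + ε • m) u) / (l u - l v))
      ↑({u ∈ V | l v < l u} : Finset E) := by
  have key : ∀ p ∈ V, ∀ q ∈ V, l v < l p → l v < l q → p ≠ q → ∀ᶠ ε : ℝ in 𝓝[≠] 0,
      ((h + ε • m) v - (h + ε • m) p) / (l p - l v) ≠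
        ((h + ε • m) v - (h + ε • m) q) / (l q - l v) := by
    intro p hp q hq hlp hlq hpq
    have hB : m ((l q - l v) • (v - p) - (l p - l v) • (v - q)) =
        (l q - l v) * (m v - m p) - (l p - l v) * (m v - m q) := by simp
    -- equal ratios force `ε` to solve a linear equation with nonzero slope
    have hbad : ∀ ε : ℝ, ((h + ε • m) v - (h + ε • m) p) / (l p - l v) =
        ((h + ε • m) v - (h + ε • m) q) / (l q - l v) →
        ε = -((l q - l v) * (h v - h p) - (l p - l v) * (h v - h q)) /
          m ((l q - l v) • (v - p) - (l p - l v) • (v - q)) := by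
      intro ε heq
      rw [div_eq_div_iff (sub_pos.2 hlp).ne' (sub_pos.2 hlq).ne'] at heq
      rw [eq_div_iff (hm p hp q hq hlp hlq hpq), hB]
      simp only [add_apply, smul_apply, smul_eq_mul] at heq
      linear_combination heq
    filter_upwards [((Set.finite_singleton _).eventually_cofinite_notMem).filter_mono
      (nhdsNE_le_cofinite 0)] with ε hε heq
    exact hε (hbad ε heq)
  have := (eventually_all_finset V).2 fun p hp => (eventually_all_finset V).2 fun q hq =>
    (eventually_imp_distrib_left).2 fun hlp => (eventually_imp_distrib_left).2 fun hlq =>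
      (eventually_imp_distrib_left).2 (key p hp q hq hlp hlq)
  filter_upwards [this] with ε hε p hp q hq heq
  obtain ⟨hpV, hlp⟩ := mem_filter.1 hp
  obtain ⟨hqV, hlq⟩ := mem_filter.1 hq
  by_contra hpq
  exact hε p hpV q hqV hlp hlq hpq heq

theorem exists_skeleton_adj_lt [FiniteDimensional ℝ E]
    (hV : ConvexIndependent ℝ ((↑) : ↥(V : Set E) → E)) (hv : v ∈ V) {l : E →L[ℝ] ℝ}
    (hl : ∃ u ∈ V, l v < l u) : ∃ w, (skeleton V).Adj v w ∧ l v < l w := by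
  obtain ⟨h, hh⟩ := hV.exists_forall_ne_lt hv
  -- a generic `m` makes the ratios of the ratio test for `h + ε • m` distinct for small `ε ≠ 0`
  set z : E × E → E := fun pq => (l pq.2 - l v) • (v - pq.1) - (l pq.1 - l v) • (v - pq.2)
  have hz : ∀ p ∈ V, ∀ q ∈ V, l v < l p → l v < l q → p ≠ q → z (p, q) ≠ 0 := by
    intro p hp q hq hlp hlq hpq hzero
    refine hV.smul_sub_ne_smul_sub hv hp hq hpq (fun h => (h ▸ hlp).false)
      (fun h => (h ▸ hlq).false) (sub_pos.2 hlq) (sub_pos.2 hlp) ?_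
    rw [← neg_sub v p, ← neg_sub v q, smul_neg, smul_neg, sub_eq_zero.1 hzero]
  set P := ({u ∈ V | l v < l u} : Finset E).offDiag
  obtain ⟨m, hm⟩ := Module.exists_dual_forall_apply_ne_zero (K := ℝ) (fun pq : P => z pq)
    fun ⟨⟨p, q⟩, hpq⟩ => by
      simp only [P, mem_offDiag, mem_filter] at hpq
      exact hz p hpq.1.1 q hpq.2.1.1 hpq.1.2 hpq.2.1.2 hpq.2.2
  set m' := LinearMap.toContinuousLinearMap m
  obtain ⟨ε, hε₁, hε₂⟩ := ((eventually_forall_ne_lt_add_smul hh m'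
    |>.filter_mono nhdsWithin_le_nhds).and (eventually_injOn_ratio h l m'
      fun p hp q hq hlp hlq hpq =>
        hm ⟨(p, q), by
          simp only [P, mem_offDiag, mem_filter]
          exact ⟨⟨hp, hlp⟩, ⟨hq, hlq⟩, hpq⟩⟩)).exists
  exact exists_skeleton_adj_of_injOn hv hε₁ hl hε₂

end simplex

section connectivity

variable [FiniteDimensional ℝ E] {V : Finset E}

theorem exists_reachable_maxVerts (hV : ConvexIndependent ℝ ((↑) : ↥(V : Set E) → E))
    (l : E →L[ℝ] ℝ) {s : Set E} {u : E} (hu : u ∈ V) (hus : u ∈ s)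
    (hs : ∀ w ∈ V, l u < l w → w ∈ s) :
    ∃ w, ∃ hw : w ∈ s, w ∈ maxVerts V l ∧
      ((skeleton V).induce s).Reachable ⟨u, hus⟩ ⟨w, hw⟩ := by
  induction hn : #{w ∈ V | l u < l w} using Nat.strong_induction_on generalizing u with
  | _ n ih =>
  by_cases hmax : ∀ w ∈ V, l w ≤ l u
  · exact ⟨u, hus, mem_maxVerts.2 ⟨hu, hmax⟩, .refl _⟩
  push Not at hmax
  obtain ⟨w₁, hadj, hlt⟩ := exists_skeleton_adj_lt hV hu hmax
  have hw₁ : w₁ ∈ V := mem_of_skeleton_adj hadj.symm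
  have hcard : #{w ∈ V | l w₁ < l w} < n := by
    refine hn ▸ card_lt_card ⟨fun w hw => mem_filter.2 ⟨(mem_filter.1 hw).1,
      hlt.trans (mem_filter.1 hw).2⟩, fun hsub => ?_⟩
    exact (mem_filter.1 (hsub (mem_filter.2 ⟨hw₁, hlt⟩))).2.false
  obtain ⟨w, hws, hwF, hreach⟩ := ih _ hcard hw₁ (hs w₁ hw₁ hlt)
    (fun w hw hlt' => hs w hw (hlt.trans hlt')) rfl
  have hadj' : ((skeleton V).induce s).Adj ⟨u, hus⟩ ⟨w₁, hs w₁ hw₁ hlt⟩ := hadj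
  exact ⟨w, hws, hwF, hadj'.reachable.trans hreach⟩

theorem skeleton_induce_preconnected (hV : ConvexIndependent ℝ ((↑) : ↥(V : Set E) → E)) :
    ((skeleton V).induce (V : Set E)).Preconnected := by
  rintro ⟨x, hx⟩ ⟨y, hy⟩
  obtain ⟨h, hh⟩ := hV.exists_forall_ne_lt hy
  obtain ⟨w, hw, hwF, hreach⟩ := exists_reachable_maxVerts hV h hx hx fun w hw _ => hw
  obtain rfl : w = y := by
    by_contra hne
    exact (hh w hw hne).not_ge ((mem_maxVerts.1 hwF).2 y hy)
  exact hreach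

lemma exists_apply_eq_of_card_lt {C : Finset E} (hC : #C < finrank ℝ (vectorSpan ℝ (V : Set E)))
    (x : E) : ∃ l : E →L[ℝ] ℝ, (∀ c ∈ C, l c = l x) ∧ ∃ a ∈ V, ∃ b ∈ V, l a < l b := by
  classical
  set S := Submodule.span ℝ ((C.image (· - x) : Finset E) : Set E)
  obtain ⟨z, hzV, hzS⟩ : ∃ z ∈ vectorSpan ℝ (V : Set E), z ∉ S := by
    by_contra! hle
    exact ((Submodule.finrank_mono hle).trans ((finrank_span_finset_le_card _).trans
      card_image_le)).not_gt hC
  obtain ⟨f, hfz, hfS⟩ := Submodule.exists_dual_map_eq_bot_of_notMem hzS inferInstance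
  refine ⟨LinearMap.toContinuousLinearMap f, fun c hc => ?_, ?_⟩
  · have : f (c - x) ∈ S.map f :=
      Submodule.mem_map_of_mem (Submodule.subset_span (mem_coe.2 (mem_image_of_mem _ hc)))
    rw [hfS, Submodule.mem_bot, map_sub, sub_eq_zero] at this
    exact this
  · by_contra! hconst
    refine hfz ((?_ : vectorSpan ℝ (V : Set E) ≤ LinearMap.ker f) hzV)
    rw [vectorSpan_def, Submodule.span_le]
    rintro _ ⟨a, ha, b, hb, rfl⟩
    have hab := le_antisymm (hconst b hb a ha) (hconst a ha b hb)
    simp only [LinearMap.coe_toContinuousLinearMap'] at hab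
    simp [hab]

lemma skeleton_induce_reachable_of_le (hV : ConvexIndependent ℝ ((↑) : ↥(V : Set E) → E))
    {C : Finset E} {l : E →L[ℝ] ℝ} {c : ℝ} (hC : ∀ z ∈ C, l z ≤ c) (htop : ∃ z ∈ V, c < l z)
    {x y : E}
    (hx : x ∈ (V : Set E) \ C) (hy : y ∈ (V : Set E) \ C) (hlx : c ≤ l x) (hly : c ≤ l y) :
    ((skeleton V).induce ((V : Set E) \ C)).Reachable ⟨x, hx⟩ ⟨y, hy⟩ := by
  have hF : ((maxVerts V l : Finset E) : Set E) ⊆ (V : Set E) \ C := fun w hw => by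
    obtain ⟨z, hz, hcz⟩ := htop
    exact ⟨maxVerts_subset hw,
      fun hwC => (hC w hwC).not_gt (hcz.trans_le ((mem_maxVerts.1 hw).2 z hz))⟩
  have hs : ∀ t, c ≤ l t → ∀ w ∈ V, l t < l w → w ∈ (V : Set E) \ C :=
    fun t ht w hw hlt => ⟨hw, fun hwC => (hC w hwC).not_gt (ht.trans_lt hlt)⟩
  obtain ⟨x', hx', hx'F, hxx'⟩ := exists_reachable_maxVerts hV l hx.1 hx (hs x hlx)
  obtain ⟨y', hy', hy'F, hyy'⟩ := exists_reachable_maxVerts hV l hy.1 hy (hs y hly)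
  have hface := skeleton_induce_preconnected (hV.mono (coe_subset.2 maxVerts_subset))
    ⟨x', hx'F⟩ ⟨y', hy'F⟩
  exact hxx'.trans ((hface.map (SimpleGraph.induceHom (.ofLE (skeleton_maxVerts_le V l))
    fun w hw => hF hw)).trans hyy'.symm)

/-- **Balinski's theorem**. -/
theorem skeleton_induce_sdiff_preconnected (hV : ConvexIndependent ℝ ((↑) : ↥(V : Set E) → E))
    {C : Finset E} (hC : #C < finrank ℝ (vectorSpan ℝ (V : Set E))) :
    ((skeleton V).induce ((V : Set E) \ C)).Preconnected := by
  rintro ⟨x, hx⟩ ⟨y, hy⟩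
  obtain ⟨l, hlC, a, ha, b, hb, hab⟩ := exists_apply_eq_of_card_lt hC x
  wlog htop : ∃ z ∈ V, l x < l z generalizing l a b
  · push Not at htop
    exact this (-l) (fun c hc => by simp [hlC c hc]) b hb a ha (by simpa using hab)
      ⟨a, ha, by simpa using hab.trans_le (htop b hb)⟩
  rcases le_or_gt (l x) (l y) with hxy | hxy
  · exact skeleton_induce_reachable_of_le hV (fun z hz => (hlC z hz).le) htop hx hy le_rfl hxy
  · exact skeleton_induce_reachable_of_le hV (l := -l) (c := -l x) (fun z hz => by simp [hlC z hz])
      ⟨y, hy.1, by simpa using hxy⟩ hx hy le_rfl (by simpa using hxy.le)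

open scoped Classical in
theorem finrank_le_card_skeleton_adj (hV : ConvexIndependent ℝ ((↑) : ↥(V : Set E) → E))
    {v : E} (hv : v ∈ V) :
    finrank ℝ (vectorSpan ℝ (V : Set E)) ≤ #{w ∈ V | (skeleton V).Adj v w} := by
  set N := {w ∈ V | (skeleton V).Adj v w}
  by_contra! hN
  change #N < _ at hN
  have hdim := finrank_vectorSpan_image_finset_le ℝ (id : E → E) V (n := #V - 1)
    (by have := card_pos.2 ⟨v, hv⟩; omega)
  rw [image_id] at hdim
  obtain ⟨q, hq, hqv⟩ : ∃ q ∈ V \ N, q ≠ v :=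
    exists_mem_ne (by rw [card_sdiff_of_subset (filter_subset _ _)]; change 1 < #V - #N; omega) v
  have hvN : v ∉ N := fun h => (mem_filter.1 h).2.ne rfl
  obtain ⟨p⟩ := skeleton_induce_sdiff_preconnected hV hN ⟨v, hv, hvN⟩
    ⟨q, by simpa using hq⟩
  -- the first step of a path from `v` avoiding the neighbours of `v` would be a neighbour
  obtain ⟨d, -, hd₁, -⟩ := p.exists_boundary_dart {z | z.1 = v} rfl hqv
  have hadj : (skeleton V).Adj v d.snd.1 := hd₁ ▸ d.adj
  exact d.snd.2.2 (mem_filter.2 ⟨d.snd.2.1, hadj⟩)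

theorem two_mul_finrank_le_card (hV : ConvexIndependent ℝ ((↑) : ↥(V : Set E) → E))
    (htri : (skeleton V).CliqueFree 3) (hd : 0 < finrank ℝ (vectorSpan ℝ (V : Set E))) :
    2 * finrank ℝ (vectorSpan ℝ (V : Set E)) ≤ #V := by
  classical
  obtain ⟨u, hu⟩ : V.Nonempty := by
    rw [nonempty_iff_ne_empty]
    rintro rfl
    rw [coe_empty, vectorSpan_empty, finrank_bot] at hd
    exact hd.false
  obtain ⟨w, hw⟩ : {w ∈ V | (skeleton V).Adj u w}.Nonempty :=
    card_pos.1 (hd.trans_le (finrank_le_card_skeleton_adj hV hu))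
  obtain ⟨hwV, huw⟩ := mem_filter.1 hw
  have hdisj : Disjoint {x ∈ V | (skeleton V).Adj u x} {x ∈ V | (skeleton V).Adj w x} :=
    disjoint_filter.2 fun x _ hux hwx =>
      htri {u, w, x} (SimpleGraph.is3Clique_triple_iff.2 ⟨huw, hux, hwx⟩)
  calc 2 * finrank ℝ (vectorSpan ℝ (V : Set E))
      ≤ #{x ∈ V | (skeleton V).Adj u x} + #{x ∈ V | (skeleton V).Adj w x} := by
        linarith [finrank_le_card_skeleton_adj hV hu, finrank_le_card_skeleton_adj hV hwV]
    _ = #({x ∈ V | (skeleton V).Adj u x} ∪ {x ∈ V | (skeleton V).Adj w x}) :=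
        (card_union_of_disjoint hdisj).symm
    _ ≤ #V := card_le_card (union_subset (filter_subset _ _) (filter_subset _ _))

end connectivity

section matching

variable {α β : Type*}

lemma exists_card_filter_lt_le [LinearOrder β] (V : Finset α) (f : α → β) {r : ℕ} (hr : 0 < r)
    (hrV : r ≤ #V) : ∃ c, #{v ∈ V | f v < c} < r ∧ r ≤ #{v ∈ V | f v ≤ c} := by
  obtain ⟨v₀, hv₀, hmin⟩ := ({v ∈ V | r ≤ #{u ∈ V | f u ≤ f v}} : Finset α).exists_min_image f (by
    obtain ⟨v, hv, hmax⟩ := V.exists_max_image f (card_pos.1 (hr.trans_le hrV))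
    exact ⟨v, mem_filter.2 ⟨hv, by rwa [filter_true_of_mem hmax]⟩⟩)
  refine ⟨f v₀, ?_, (mem_filter.1 hv₀).2⟩
  by_contra! h
  obtain ⟨u, hu, humax⟩ :=
    ({v ∈ V | f v < f v₀} : Finset α).exists_max_image f (card_pos.1 (hr.trans_le h))
  obtain ⟨huV, hlt⟩ := mem_filter.1 hu
  refine (hmin u (mem_filter.2 ⟨huV, h.trans (card_le_card fun w hw => ?_)⟩)).not_gt hlt
  exact mem_filter.2 ⟨(mem_filter.1 hw).1, humax w hw⟩

lemma exists_matching_of_injective [DecidableEq α] [DecidableEq β] {A : Finset α}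
    {N : α → Finset β} {m : ℕ} (F : A → β ⊕ Fin m) (hFinj : Function.Injective F)
    (hFt : ∀ a : A, F a ∈ (N a).disjSum univ) :
    ∃ P : Finset (α × β), #A - m ≤ #P ∧ (∀ p ∈ P, p.1 ∈ A ∧ p.2 ∈ N p.1) ∧
      Set.InjOn Prod.fst (P : Set (α × β)) ∧ Set.InjOn Prod.snd (P : Set (α × β)) := by
  have hFN : ∀ a b, F a = .inl b → b ∈ N a := fun a b h => inl_mem_disjSum.1 (h ▸ hFt a)
  set P := (A ×ˢ A.biUnion N).filter fun p => ∃ h : p.1 ∈ A, F ⟨p.1, h⟩ = .inl p.2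
  have hP : ∀ p ∈ P, ∃ h : p.1 ∈ A, F ⟨p.1, h⟩ = .inl p.2 := fun p hp => (mem_filter.1 hp).2
  refine ⟨P, ?_, fun p hp => ?_, fun p hp q hq hpq => ?_, fun p hp q hq hpq => ?_⟩
  · set L := (univ : Finset A).filter fun a => (F a).isLeft
    have hR : #(univ \ L) ≤ m := by
      calc #(univ \ L) ≤ #((∅ : Finset β).disjSum (univ : Finset (Fin m))) := by
            refine card_le_card_of_injOn F (fun a ha => ?_) hFinj.injOn
            cases hFa : F a with
            | inl b => simp [L, hFa] at ha
            | inr j => simp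
        _ = m := by simp
    have hL : #(L.map (Function.Embedding.subtype _)) ≤ #P := by
      refine card_le_card_of_surjOn Prod.fst fun x hx => ?_
      obtain ⟨a, ha, rfl⟩ := mem_map.1 hx
      obtain ⟨b, hb⟩ := Sum.isLeft_iff.1 (mem_filter.1 ha).2
      exact ⟨(a.1, b), mem_filter.2 ⟨mem_product.2 ⟨a.2, mem_biUnion.2 ⟨a.1, a.2, hFN a b hb⟩⟩,
        a.2, hb⟩, rfl⟩
    have hsplit : #(univ \ L) + #L = #A := by
      rw [card_sdiff_add_card_eq_card (filter_subset _ _), card_univ, Fintype.card_coe]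
    rw [card_map] at hL
    omega
  · obtain ⟨h, hF⟩ := hP p hp
    exact ⟨h, hFN _ _ hF⟩
  · obtain ⟨h, hFp⟩ := hP p hp
    obtain ⟨_, hFq⟩ := hP q hq
    have hFq' : F ⟨p.1, h⟩ = .inl q.2 := by simpa [hpq] using hFq
    exact Prod.ext hpq (Sum.inl_injective (hFp.symm.trans hFq'))
  · obtain ⟨h, hFp⟩ := hP p hp
    obtain ⟨_, hFq⟩ := hP q hq
    have := hFinj (hFp.trans ((congrArg Sum.inl hpq).trans hFq.symm))
    exact Prod.ext (congrArg Subtype.val this) hpq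

/-- The deficiency version of Hall's theorem. -/
theorem exists_matching_or_deficient [DecidableEq α] [DecidableEq β] (A : Finset α)
    (N : α → Finset β) {k : ℕ} (hk : k ≤ #A) :
    (∃ P : Finset (α × β), k ≤ #P ∧ (∀ p ∈ P, p.1 ∈ A ∧ p.2 ∈ N p.1) ∧
      Set.InjOn Prod.fst (P : Set (α × β)) ∧ Set.InjOn Prod.snd (P : Set (α × β))) ∨
    ∃ s ⊆ A, #(A \ s) + #(s.biUnion N) < k := by
  -- Hall's theorem, after adding `#A - k` new vertices adjacent to every element of `A`
  set t : A → Finset (β ⊕ Fin (#A - k)) := fun a => (N a).disjSum univ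
  by_cases hall : ∀ s : Finset A, #s ≤ #(s.biUnion t)
  · obtain ⟨F, hFinj, hFt⟩ := (all_card_le_biUnion_card_iff_exists_injective t).1 hall
    obtain ⟨P, hPk, hP⟩ := exists_matching_of_injective F hFinj hFt
    exact Or.inl ⟨P, by omega, hP⟩
  right
  push Not at hall
  obtain ⟨s, hs⟩ := hall
  have hsA : s.map (Function.Embedding.subtype _) ⊆ A := fun a ha => by
    obtain ⟨a', -, rfl⟩ := mem_map.1 ha
    exact a'.2
  obtain ⟨a₀, ha₀⟩ : s.Nonempty := nonempty_iff_ne_empty.2 (by rintro rfl; simp at hs)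
  have hsub : ((s.map (Function.Embedding.subtype _)).biUnion N).disjSum
      (univ : Finset (Fin (#A - k))) ⊆ s.biUnion t := by
    intro x hx
    rcases mem_disjSum.1 hx with ⟨b, hb, rfl⟩ | ⟨j, -, rfl⟩
    · obtain ⟨a, ha, hba⟩ := mem_biUnion.1 hb
      obtain ⟨a', ha', rfl⟩ := mem_map.1 ha
      exact mem_biUnion.2 ⟨a', ha', inl_mem_disjSum.2 hba⟩
    · exact mem_biUnion.2 ⟨a₀, ha₀, inr_mem_disjSum.2 (mem_univ j)⟩
  have hcard := card_le_card hsub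
  rw [card_disjSum, card_univ, Fintype.card_fin] at hcard
  have hsA' : #s ≤ #A := by simpa using card_le_univ s
  refine ⟨_, hsA, ?_⟩
  rw [card_sdiff_of_subset hsA, card_map]
  omega

end matching

section levels

variable {α β : Type*} [DecidableEq α] [LinearOrder β] (G : SimpleGraph α) (V : Finset α)
  (f : α → β)

lemma exists_adj_across_level {r : ℕ} (hV : 2 * r ≤ #V)
    (hG : ∀ D : Finset α, #D < r → (G.induce ((V : Set α) \ D)).Preconnected) {c : β}
    (hlow : #{v ∈ V | f v < c} < r) {D : Finset α} (hD : #D < r)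
    (hT : ∀ v ∈ V, f v = c → v ∈ D) {a : α} (ha : a ∈ V) (haD : a ∉ D) (hac : f a < c) :
    ∃ x ∈ V, ∃ y ∈ V, x ∉ D ∧ y ∉ D ∧ f x < c ∧ c < f y ∧ G.Adj x y := by
  obtain ⟨b, hb, hbc⟩ : ∃ b ∈ V \ D, b ∉ ({v ∈ V | f v < c} : Finset α) := by
    by_contra! h
    have := card_le_card h
    have := le_card_sdiff D V
    omega
  obtain ⟨hbV, hbD⟩ := mem_sdiff.1 hb
  have hlevel : ∀ z ∈ V, z ∉ D → ¬ f z < c → c < f z := fun z hz hzD h =>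
    lt_of_le_of_ne (not_lt.1 h) fun h' => hzD (hT z hz h'.symm)
  obtain ⟨p⟩ := hG D hD ⟨a, ha, haD⟩ ⟨b, hbV, hbD⟩
  obtain ⟨d, -, hd₁, hd₂⟩ := p.exists_boundary_dart {z | f z.1 < c} hac
    fun h => hbc (mem_filter.2 ⟨hbV, h⟩)
  exact ⟨d.fst.1, d.fst.2.1, d.snd.1, d.snd.2.1, d.fst.2.2, d.snd.2.2, hd₁,
    hlevel _ d.snd.2.1 d.snd.2.2 hd₂, d.adj⟩

lemma pairwiseDisjoint_pair_of_injOn {P : Finset (α × α)} {c : β}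
    (hP : ∀ p ∈ P, f p.1 < c ∧ c < f p.2 ∨ p.1 = p.2 ∧ f p.1 = c)
    (h₁ : Set.InjOn Prod.fst (P : Set (α × α))) (h₂ : Set.InjOn Prod.snd (P : Set (α × α))) :
    (P : Set (α × α)).PairwiseDisjoint fun p => ({p.1, p.2} : Finset α) := by
  -- a shared vertex off the level `c` is a shared first or a shared second coordinate
  have hsnd : ∀ p ∈ P, ∀ q ∈ P, p.1 = q.2 → p.2 = q.2 := by
    intro p hp q hq h
    rcases hP p hp with ⟨hp₁, -⟩ | ⟨hp, -⟩
    · rcases hP q hq with ⟨-, hq₂⟩ | ⟨hq, hqc⟩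
      · exact ((h ▸ hp₁).trans hq₂).false.elim
      · exact ((h.trans hq.symm ▸ hp₁).ne hqc).elim
    · exact hp ▸ h
  intro p hp q hq hpq
  simp only [Function.onFun, disjoint_left, mem_insert, mem_singleton]
  rintro x (rfl | rfl) (hx | hx)
  · exact hpq (h₁ hp hq hx)
  · exact hpq (h₂ hp hq (hsnd p hp q hq hx))
  · exact hpq (h₂ hp hq (hsnd q hq p hp hx.symm).symm)
  · exact hpq (h₂ hp hq hx)

/-- Vertices below `c` may be matched to neighbours above `c`, vertices on or above `c` only to
themselves. -/
def levelNbhd [DecidableRel G.Adj] (c : β) (a : α) : Finset α :=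
  if f a < c then {b ∈ V | c < f b ∧ G.Adj a b} else {a}

lemma le_card_sdiff_add_card_biUnion_levelNbhd [DecidableRel G.Adj] {r : ℕ} (hV : 2 * r ≤ #V)
    (hG : ∀ D : Finset α, #D < r → (G.induce ((V : Set α) \ D)).Preconnected) {c : β}
    (hlow : #{v ∈ V | f v < c} < r) (hle : r ≤ #{v ∈ V | f v ≤ c}) {s : Finset α}
    (hsA : s ⊆ {v ∈ V | f v ≤ c}) :
    r ≤ #({v ∈ V | f v ≤ c} \ s) + #(s.biUnion (levelNbhd G V f c)) := by
  by_contra! hs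
  set D := ({v ∈ V | f v ≤ c} \ s) ∪ s.biUnion (levelNbhd G V f c)
  have hT : ∀ v ∈ V, f v = c → v ∈ D := by
    intro v hv hvc
    by_cases hvs : v ∈ s
    · exact mem_union_right _ (mem_biUnion.2 ⟨v, hvs, by simp [levelNbhd, hvc]⟩)
    · exact mem_union_left _ (mem_sdiff.2 ⟨mem_filter.2 ⟨hv, hvc.le⟩, hvs⟩)
  obtain ⟨a, has, hac⟩ : ∃ a ∈ s, f a < c := by
    by_contra! h
    have hself : s ⊆ s.biUnion (levelNbhd G V f c) := fun a ha =>
      mem_biUnion.2 ⟨a, ha, by simp [levelNbhd, not_lt.2 (h a ha)]⟩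
    have := card_le_card hself
    have := card_sdiff_add_card_eq_card hsA
    omega
  have haD : a ∉ D := by
    simp only [D, mem_union, Finset.mem_sdiff, mem_biUnion, not_or, not_and, not_exists]
    refine ⟨fun _ h => h has, fun a' _ ha' => ?_⟩
    by_cases h' : f a' < c
    · simp only [levelNbhd, h', if_true, mem_filter] at ha'
      exact (hac.trans ha'.2.1).false
    · simp only [levelNbhd, h', if_false, mem_singleton] at ha'
      exact h' (ha' ▸ hac)
  obtain ⟨x, hx, y, hy, hxD, hyD, hxc, hcy, hxy⟩ := exists_adj_across_level G V f hV hG hlow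
    ((card_union_le _ _).trans_lt hs) hT (mem_filter.1 (hsA has)).1 haD hac
  have hxs : x ∈ s := by
    by_contra h
    exact hxD (mem_union_left _ (mem_sdiff.2 ⟨mem_filter.2 ⟨hx, hxc.le⟩, h⟩))
  exact hyD (mem_union_right _
    (mem_biUnion.2 ⟨x, hxs, by simp [levelNbhd, hxc, hy, hcy, hxy]⟩))

theorem exists_level_matching [DecidableRel G.Adj] {r : ℕ} (hr : 0 < r) (hV : 2 * r ≤ #V)
    (hG : ∀ D : Finset α, #D < r → (G.induce ((V : Set α) \ D)).Preconnected) :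
    ∃ c, ∃ P : Finset (α × α), r ≤ #P ∧
      (∀ p ∈ P, p.1 ∈ V ∧ f p.1 ≤ c ∧ c ≤ f p.2 ∧ (p.1 = p.2 ∨ G.Adj p.1 p.2)) ∧
      (P : Set (α × α)).PairwiseDisjoint fun p => ({p.1, p.2} : Finset α) := by
  obtain ⟨c, hlow, hle⟩ := exists_card_filter_lt_le V f hr (by omega)
  obtain ⟨P, hPr, hPN, hinj₁, hinj₂⟩ | ⟨s, hsA, hs⟩ :=
    exists_matching_or_deficient {v ∈ V | f v ≤ c} (levelNbhd G V f c) hle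
  swap
  · exact absurd hs (not_lt.2 (le_card_sdiff_add_card_biUnion_levelNbhd G V f hV hG hlow hle hsA))
  have hP : ∀ p ∈ P, p.1 ∈ V ∧ f p.1 ≤ c ∧
      (f p.1 < c ∧ c < f p.2 ∧ G.Adj p.1 p.2 ∨ p.1 = p.2 ∧ f p.1 = c) := by
    intro p hp
    obtain ⟨hpA, hpN⟩ := hPN p hp
    obtain ⟨hpV, hpc⟩ := mem_filter.1 hpA
    by_cases hlt : f p.1 < c
    · simp only [levelNbhd, hlt, if_true, mem_filter] at hpN
      exact ⟨hpV, hpc, Or.inl ⟨hlt, hpN.2⟩⟩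
    · simp only [levelNbhd, hlt, if_false, mem_singleton] at hpN
      exact ⟨hpV, hpc, Or.inr ⟨hpN.symm, le_antisymm hpc (not_lt.1 hlt)⟩⟩
  refine ⟨c, P, hPr, fun p hp => ?_, pairwiseDisjoint_pair_of_injOn f
    (fun p hp => Or.imp (fun h => ⟨h.1, h.2.1⟩) id (hP p hp).2.2) hinj₁ hinj₂⟩
  obtain ⟨hpV, hpc, ⟨-, hcp, hadj⟩ | heq⟩ := hP p hp
  · exact ⟨hpV, hpc, hcp.le, Or.inr hadj⟩
  · exact ⟨hpV, hpc, heq.1 ▸ heq.2.ge, Or.inl heq.1⟩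

end levels

theorem exists_faces_of_level_matching [DecidableEq E] {V : Finset E}
    (hV : ConvexIndependent ℝ ((↑) : ↥(V : Set E) → E)) {f : E → ℝ}
    (hf : ContinuousOn f (convexHull ℝ (V : Set E))) {c : ℝ} {r : ℕ} {P : Finset (E × E)}
    (hPr : r ≤ #P)
    (hP : ∀ p ∈ P, p.1 ∈ V ∧ f p.1 ≤ c ∧ c ≤ f p.2 ∧ (p.1 = p.2 ∨ (skeleton V).Adj p.1 p.2))
    (hPdisj : (P : Set (E × E)).PairwiseDisjoint fun p => ({p.1, p.2} : Finset E)) :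
    ∃ F : Fin r → Set E, (∀ j, IsExposed ℝ (convexHull ℝ (V : Set E)) (F j)) ∧
      (∀ j, (F j).Nonempty) ∧ Pairwise (Function.onFun Disjoint F) ∧
      (⋂ j, f '' F j).Nonempty := by
  choose! l hl using fun p hp => exists_maxVerts_eq_pair hV (hP p hp).1 (hP p hp).2.2.2
  let e : Fin r ↪ P := (Fin.castLEEmb hPr).trans P.equivFin.symm.toEmbedding
  refine ⟨fun j => convexHull ℝ {(e j).1.1, (e j).1.2}, fun j => ?_, fun j => ?_,
    fun i j hij => ?_, c, Set.mem_iInter.2 fun j => ?_⟩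
  · dsimp only
    rw [← hl _ (e j).2]
    exact isExposed_convexHull_maxVerts V _
  · exact ⟨_, subset_convexHull ℝ _ (Set.mem_insert _ _)⟩
  · have := hPdisj (e i).2 (e j).2 (Subtype.val_injective.ne (e.injective.ne hij))
    simp only [Function.onFun, ← hl _ (e i).2, ← hl _ (e j).2]
    refine disjoint_convexHull_maxVerts (disjoint_coe.1 ?_)
    rw [hl _ (e i).2, hl _ (e j).2, ← coe_pair, ← coe_pair]
    exact disjoint_coe.2 this
  · have hsub : {(e j).1.1, (e j).1.2} ⊆ (V : Set E) :=
      hl _ (e j).2 ▸ coe_subset.2 maxVerts_subset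
    exact (convex_convexHull ℝ _).isPreconnected.intermediate_value
      (subset_convexHull ℝ _ (Set.mem_insert _ _))
      (subset_convexHull ℝ {(e j).1.1, (e j).1.2} (Set.mem_insert_of_mem _ rfl))
      (hf.mono (convexHull_mono hsub)) ⟨(hP _ (e j).2).2.1, (hP _ (e j).2).2.2.1⟩

/-- Tverberg theorem for triangle-free polytopes, `d = 1`: let `P = conv V` be a polytope
of dimension at least `r` whose vertex set is `V` and whose 1-skeleton is triangle-free
(no three distinct vertices are pairwise joined by edges of `P`).  Then for every
`f : ℝ^N → ℝ` continuous on `P` there are `r` pairwise disjoint (nonempty, exposed) faces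
of `P` whose images under `f` intersect. -/
theorem tverberg_triangle_free_polytope (r N : ℕ) (hr : 1 ≤ r)
    (V : Finset (EuclideanSpace ℝ (Fin N)))
    (hdim : r ≤
      Module.finrank ℝ (affineSpan ℝ (V : Set (EuclideanSpace ℝ (Fin N)))).direction)
    (hvert : (V : Set (EuclideanSpace ℝ (Fin N))) =
      Set.extremePoints ℝ (convexHull ℝ (V : Set (EuclideanSpace ℝ (Fin N)))))
    (htrianglefree : ¬ ∃ u ∈ V, ∃ v ∈ V, ∃ w ∈ V, u ≠ v ∧ u ≠ w ∧ v ≠ w ∧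
      IsExposed ℝ (convexHull ℝ (V : Set (EuclideanSpace ℝ (Fin N))))
        (convexHull ℝ {u, v}) ∧
      IsExposed ℝ (convexHull ℝ (V : Set (EuclideanSpace ℝ (Fin N))))
        (convexHull ℝ {u, w}) ∧
      IsExposed ℝ (convexHull ℝ (V : Set (EuclideanSpace ℝ (Fin N))))
        (convexHull ℝ {v, w}))
    (f : EuclideanSpace ℝ (Fin N) → ℝ)
    (hf : ContinuousOn f (convexHull ℝ (V : Set (EuclideanSpace ℝ (Fin N))))) :
    ∃ F : Fin r → Set (EuclideanSpace ℝ (Fin N)),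
      (∀ j, IsExposed ℝ (convexHull ℝ (V : Set (EuclideanSpace ℝ (Fin N)))) (F j)) ∧
      (∀ j, (F j).Nonempty) ∧
      Pairwise (Function.onFun Disjoint F) ∧
      (⋂ j, f '' F j).Nonempty := by
  classical
  have hV : ConvexIndependent ℝ
      ((↑) : ↥(V : Set (EuclideanSpace ℝ (Fin N))) → EuclideanSpace ℝ (Fin N)) := by
    rw [hvert]
    exact (convex_convexHull ℝ _).convexIndependent_extremePoints
  rw [direction_affineSpan] at hdim
  obtain ⟨c, P, hPr, hP, hPdisj⟩ := exists_level_matching (skeleton V) V f hr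
    (by linarith [two_mul_finrank_le_card hV (skeleton_cliqueFree_three htrianglefree) (by omega)])
    fun D hD => skeleton_induce_sdiff_preconnected hV (by omega)
  exact exists_faces_of_level_matching hV hf hPr hP hPdisj
end

section
/- Let r ≥ 1 and let P = conv V be a polytope in ℝ^N of dimension at least r, where V is exactly the set of extreme points (vertices) of P, and assume the 1-skeleton of P is triangle-free: no three distinct vertices are pairwise adjacent (u, v adjacent meaning conv{u,v} is a face of P). Then for every function f : ℝ^N → ℝ continuous on P there exist r-1 edges conv{u_1,w_1}, …, conv{u_{r-1},w_{r-1}} of P whose vertex pairs {u_i, w_i} are pairwise disjoint, and a vertex v ∈ V distinct from all the u_i and w_i, such that f(v) ∈ f(conv{u_i, w_i}) for every i = 1, …, r-1. -/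
/-
Call two vertices adjacent when some linear functional attains its maximum over `V` exactly at
them; the segment between them is then an edge. A vertex that does not maximise a functional `ℓ`
has a neighbour with larger `ℓ` (the simplex step: maximise the slope of `ℓ` over the rays from the
vertex, breaking ties generically). Consequently every vertex has at least `r` neighbours, and
removing fewer than `r` vertices keeps the graph connected (Balinski): walk up along a functional
that is constant on the removed vertices and on the start vertex, and connect the two tops inside
the top face. Triangle-freeness turns the degree bound into `2 r ≤ #V`.

Let `A'` be `r` vertices with the smallest values of `f` and `v` the one with the largest value in
`A'`. Connectivity verifies Hall's condition for matching `A' \ {v}` into `V \ A'` along edges,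
and on each matched edge `f` runs from below `f v` to above it.
-/


open Finset Filter Function Module Topology

lemma eventually_add_mul_lt_of_toLex_lt {a₁ b₁ a₂ b₂ : ℝ}
    (h : toLex (a₁, b₁) < toLex (a₂, b₂)) :
    ∀ᶠ ε in 𝓝[>] (0 : ℝ), a₁ + ε * b₁ < a₂ + ε * b₂ := by
  rcases Prod.Lex.toLex_lt_toLex.1 h with h | ⟨rfl, h⟩
  · have hlim (a b : ℝ) : Tendsto (fun ε : ℝ => a + ε * b) (𝓝 0) (𝓝 a) := by
      simpa using (show Continuous fun ε : ℝ => a + ε * b by fun_prop).tendsto 0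
    exact nhdsWithin_le_nhds ((hlim a₁ b₁).eventually_lt (hlim a₂ b₂) h)
  · filter_upwards [self_mem_nhdsWithin] with ε (hε : 0 < ε)
    gcongr

lemma Finset.exists_subset_card_eq_forall_le {α β : Type*} [DecidableEq α] [LinearOrder β]
    (V : Finset α) (f : α → β) {k : ℕ} (hk : k ≤ #V) :
    ∃ A ⊆ V, #A = k ∧ ∀ a ∈ A, ∀ b ∈ V \ A, f a ≤ f b := by
  induction k with
  | zero => exact ⟨∅, empty_subset _, rfl, by simp⟩
  | succ k ih =>
    obtain ⟨A, hAV, hA, hle⟩ := ih (by omega)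
    obtain ⟨m, hm, hmin⟩ := (V \ A).exists_min_image f
      (by rw [← card_pos, card_sdiff_of_subset hAV]; omega)
    have hmA : m ∉ A := (mem_sdiff.1 hm).2
    refine ⟨insert m A, insert_subset (mem_sdiff.1 hm).1 hAV,
      by rw [card_insert_of_notMem hmA, hA], ?_⟩
    intro a ha b hb
    have hb' : b ∈ V \ A := by simp only [mem_sdiff, mem_insert, not_or] at hb ⊢; tauto
    rcases mem_insert.1 ha with rfl | ha
    exacts [hmin b hb', hle a ha b hb']

lemma pairwise_disjoint_pair {ι α : Type*} {u w : ι → α} (hu : Injective u) (hw : Injective w)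
    (huw : ∀ i j, u i ≠ w j) : Pairwise (Disjoint on fun i => ({u i, w i} : Set α)) := by
  intro i j hij
  simp [onFun, hu.ne hij.symm, hw.ne hij.symm, huw, (huw _ _).symm]

namespace SimpleGraph

variable {α : Type*}

def withoutVerts (G : SimpleGraph α) (C : Set α) : SimpleGraph α where
  Adj x y := G.Adj x y ∧ x ∉ C ∧ y ∉ C
  symm := ⟨fun _ _ h => ⟨h.1.symm, h.2.2, h.2.1⟩⟩
  loopless := ⟨fun _ h => G.irrefl h.1⟩

@[simp]
lemma withoutVerts_adj {G : SimpleGraph α} {C : Set α} {x y : α} :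
    (G.withoutVerts C).Adj x y ↔ G.Adj x y ∧ x ∉ C ∧ y ∉ C :=
  Iff.rfl

lemma mem_of_reachable_withoutVerts {G : SimpleGraph α} {C S : Set α}
    (hS : ∀ x ∈ S, ∀ y, G.Adj x y → y ∉ C → y ∈ S) {s t : α} (hs : s ∈ S)
    (h : (G.withoutVerts C).Reachable s t) : t ∈ S := by
  rw [reachable_iff_reflTransGen] at h
  induction h with
  | refl => exact hs
  | tail _ hxy ih => exact hS _ ih _ (withoutVerts_adj.1 hxy).1 (withoutVerts_adj.1 hxy).2.2

def IsVertexConnectedOn (G : SimpleGraph α) (V : Finset α) (k : ℕ) : Prop :=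
  ∀ C ⊆ V, #C < k → ∀ s ∈ V, ∀ b ∈ V, s ∉ C → b ∉ C → (G.withoutVerts C).Reachable s b

variable [DecidableEq α] {G : SimpleGraph α} [DecidableRel G.Adj] {V A B : Finset α}

lemma card_le_card_biUnion_adj (hGV : ∀ x y, G.Adj x y → y ∈ V) (hBV : B ⊆ V)
    (hconn : G.IsVertexConnectedOn V #(V \ B))
    {S : Finset α} (hSV : S ⊆ V \ B) (hSB : #S ≤ #B) :
    #S ≤ #(S.biUnion fun a => B.filter (G.Adj a)) := by
  set N := S.biUnion fun a => B.filter (G.Adj a)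
  have hNB : N ⊆ B := biUnion_subset.2 fun _ _ => filter_subset _ _
  by_contra! hNS
  obtain ⟨s, hs⟩ : S.Nonempty := by rw [← card_pos]; omega
  obtain ⟨b, hb⟩ : (B \ N).Nonempty := by
    rw [← card_pos, card_sdiff_of_subset hNB]; omega
  -- the neighbours of `S` in `B`, together with the rest of `V \ B`, separate `S` from `B`
  set C := ((V \ B) \ S) ∪ N
  have hCV : C ⊆ V := union_subset (sdiff_subset.trans sdiff_subset) (hNB.trans hBV)
  have hC : #C < #(V \ B) := by
    have h₁ : #C ≤ #((V \ B) \ S) + #N := card_union_le _ _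
    rw [card_sdiff_of_subset hSV] at h₁
    have h₂ := card_le_card hSV
    omega
  have hsC : s ∉ C := by simp [C, N, hs, (mem_sdiff.1 (hSV hs)).2]
  have hbC : b ∉ C := by simp [C, (mem_sdiff.1 hb).1, (mem_sdiff.1 hb).2]
  have hclosed : ∀ x ∈ (S : Set α), ∀ y, G.Adj x y → y ∉ (C : Set α) → y ∈ (S : Set α) := by
    intro x hx y hxy hyC
    by_contra hyS
    by_cases hyB : y ∈ B
    · exact hyC (mem_union_right _ (mem_biUnion.2 ⟨x, hx, mem_filter.2 ⟨hyB, hxy⟩⟩))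
    · exact hyC (mem_union_left _ (mem_sdiff.2 ⟨mem_sdiff.2 ⟨hGV x y hxy, hyB⟩, hyS⟩))
  have hbS := mem_of_reachable_withoutVerts hclosed (by exact_mod_cast hs)
    (hconn C hCV hC s ((mem_sdiff.1 (hSV hs)).1) b (hBV (mem_sdiff.1 hb).1) hsC hbC)
  exact (mem_sdiff.1 (hSV hbS)).2 (mem_sdiff.1 hb).1

lemma exists_injective_adj (hGV : ∀ x y, G.Adj x y → y ∈ V) (hBV : B ⊆ V)
    (hconn : G.IsVertexConnectedOn V #(V \ B))
    (hAV : A ⊆ V \ B) (hAB : #A ≤ #B) :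
    ∃ m : A → α, Injective m ∧ ∀ a, m a ∈ B ∧ G.Adj a (m a) := by
  have hall (s : Finset A) : #s ≤ #(s.biUnion fun a => B.filter (G.Adj a)) := by
    have hsA : s.image Subtype.val ⊆ A := by
      intro x hx
      obtain ⟨a, -, rfl⟩ := mem_image.1 hx
      exact a.2
    have := card_le_card_biUnion_adj hGV hBV hconn (hsA.trans hAV)
      ((card_le_card hsA).trans hAB)
    rwa [card_image_of_injective _ Subtype.val_injective, image_biUnion] at this
  obtain ⟨m, hm, hmB⟩ := (all_card_le_biUnion_card_iff_exists_injective _).1 hall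
  exact ⟨m, hm, fun a => mem_filter.1 (hmB a)⟩

lemma two_mul_le_card_of_cliqueFree (hG : G.CliqueFree 3) {r : ℕ} (hr : 1 ≤ r)
    (hV : V.Nonempty) (hdeg : ∀ v ∈ V, r ≤ #(V.filter (G.Adj v))) : 2 * r ≤ #V := by
  obtain ⟨v, hv⟩ := hV
  obtain ⟨u, hu⟩ : (V.filter (G.Adj v)).Nonempty := card_pos.1 (by have := hdeg v hv; omega)
  have hdisj : Disjoint (V.filter (G.Adj v)) (V.filter (G.Adj u)) :=
    disjoint_filter.2 fun x _ hvx hux =>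
      hG {v, u, x} (is3Clique_triple_iff.2 ⟨(mem_filter.1 hu).2, hvx, hux⟩)
  calc 2 * r ≤ #(V.filter (G.Adj v)) + #(V.filter (G.Adj u)) := by
        have := hdeg v hv; have := hdeg u (mem_filter.1 hu).1; omega
    _ = #(V.filter (G.Adj v) ∪ V.filter (G.Adj u)) := (card_union_of_disjoint hdisj).symm
    _ ≤ #V := card_le_card (union_subset (filter_subset _ _) (filter_subset _ _))

theorem exists_adj_pairs_around {β : Type*} [LinearOrder β] (f : α → β) {r : ℕ} (hr : 1 ≤ r)
    (hV : 2 * r ≤ #V) (hGV : ∀ x y, G.Adj x y → y ∈ V)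
    (hconn : G.IsVertexConnectedOn V r) :
    ∃ v ∈ V, ∃ u w : Fin (r - 1) → α, Injective u ∧ Injective w ∧ (∀ i j, u i ≠ w j) ∧
      (∀ i, v ≠ u i ∧ v ≠ w i) ∧ ∀ i, G.Adj (u i) (w i) ∧ f (u i) ≤ f v ∧ f v ≤ f (w i) := by
  obtain ⟨A', hA'V, hA', hle⟩ := V.exists_subset_card_eq_forall_le f (k := r) (by omega)
  obtain ⟨v, hvA', hvmax⟩ := A'.exists_max_image f (card_pos.1 (by omega))
  set A := A'.erase v
  have hVB : V \ (V \ A') = A' := Finset.sdiff_sdiff_eq_self hA'V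
  have hA : #A = r - 1 := by rw [card_erase_of_mem hvA', hA']
  have hB : #(V \ A') = #V - r := by rw [card_sdiff_of_subset hA'V, hA']
  obtain ⟨m, hm, hmB⟩ := exists_injective_adj (A := A) hGV sdiff_subset (by rwa [hVB, hA'])
    (by rw [hVB]; exact erase_subset _ _) (by omega)
  let e : Fin (r - 1) ≃ A := (A.equivFinOfCardEq hA).symm
  have huA' : ∀ i, (e i : α) ∈ A' := fun i => mem_of_mem_erase (e i).2
  have hwA' : ∀ i, m (e i) ∉ A' := fun i => (mem_sdiff.1 (hmB (e i)).1).2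
  refine ⟨v, hA'V hvA', fun i => e i, fun i => m (e i), Subtype.val_injective.comp e.injective,
    hm.comp e.injective, fun i j h => hwA' j ?_, fun i => ⟨(ne_of_mem_erase (e i).2).symm,
      fun h => hwA' i ?_⟩, fun i => ⟨(hmB _).2, hvmax _ (huA' i), hle _ hvA' _ (hmB _).1⟩⟩
  · rw [← show (e i : α) = m (e j) from h]
    exact huA' i
  · rw [← show v = m (e i) from h]
    exact hvA'

end SimpleGraph

section Convex

variable {E : Type*} [NormedAddCommGroup E] [NormedSpace ℝ E]

lemma eq_of_sub_eq_smul_sub_of_mem_extremePoints {P : Set E} {v u₁ u₂ : E} (hv : v ∈ P)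
    (hu₁ : u₁ ∈ P.extremePoints ℝ) (hu₂ : u₂ ∈ P.extremePoints ℝ) (hv₁ : u₁ ≠ v) (hv₂ : u₂ ≠ v)
    {s : ℝ} (hs : 0 < s) (h : u₁ - v = s • (u₂ - v)) : u₁ = u₂ := by
  wlog hs₁ : s ≤ 1 generalizing u₁ u₂ s
  · refine (this hu₂ hu₁ hv₂ hv₁ (inv_pos.2 hs) ?_ (inv_le_one_of_one_le₀ (le_of_not_ge hs₁))).symm
    rw [h, smul_smul, inv_mul_cancel₀ hs.ne', one_smul]
  have hseg : u₁ ∈ segment ℝ v u₂ := by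
    refine ⟨1 - s, s, by linarith, hs.le, by ring, ?_⟩
    rw [show u₁ = v + s • (u₂ - v) by rw [← h]; abel]
    module
  rcases (mem_extremePoints_iff_forall_segment.1 hu₁).2 v hv u₂ hu₂.1 hseg with h | h
  exacts [absurd h.symm hv₁, h.symm]

lemma injOn_inv_smul_sub_of_subset_extremePoints {P W : Set E} {v : E} (hv : v ∈ P)
    (hW : W ⊆ P.extremePoints ℝ) (hvW : v ∉ W) {q : E → ℝ} (hq : ∀ u ∈ W, 0 < q u) :
    W.InjOn fun u => (q u)⁻¹ • (u - v) := by
  intro u₁ hu₁ u₂ hu₂ hd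
  refine eq_of_sub_eq_smul_sub_of_mem_extremePoints hv (hW hu₁) (hW hu₂)
    (ne_of_mem_of_not_mem hu₁ hvW) (ne_of_mem_of_not_mem hu₂ hvW)
    (div_pos (hq u₁ hu₁) (hq u₂ hu₂)) ?_
  calc u₁ - v = q u₁ • (q u₁)⁻¹ • (u₁ - v) := by rw [smul_inv_smul₀ (hq u₁ hu₁).ne']
    _ = q u₁ • (q u₂)⁻¹ • (u₂ - v) := by rw [show (q u₁)⁻¹ • (u₁ - v) = _ from hd]
    _ = _ := by rw [smul_smul, div_eq_mul_inv]

lemma exists_forall_lt_of_mem_extremePoints {V : Set E} (hV : V.Finite) {v : E}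
    (hv : v ∈ (convexHull ℝ V).extremePoints ℝ) : ∃ h : E →L[ℝ] ℝ, ∀ u ∈ V, u ≠ v → h u < h v := by
  have hvW : v ∉ convexHull ℝ (V \ {v}) := fun hmem =>
    (extremePoints_convexHull_subset (inter_extremePoints_subset_extremePoints_of_subset
      (convexHull_mono Set.sdiff_subset) ⟨hmem, hv⟩)).2 rfl
  obtain ⟨h, c, hlt, hc⟩ := geometric_hahn_banach_closed_point (convex_convexHull ℝ _)
    ((hV.sdiff (t := {v})).isCompact_convexHull (𝕜 := ℝ).isClosed) hvW
  exact ⟨h, fun u hu huv => (hlt u (subset_convexHull ℝ _ ⟨hu, huv⟩)).trans hc⟩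

lemma IsExposed.eq_convexHull_inter {V F : Set E} (hV : V.Finite)
    (hF : IsExposed ℝ (convexHull ℝ V) F) : F = convexHull ℝ (F ∩ V) := by
  have hconv := hF.convex (convex_convexHull ℝ V)
  refine subset_antisymm ?_ (convexHull_min Set.inter_subset_left hconv)
  calc F = closure (convexHull ℝ (F.extremePoints ℝ)) :=
        (closure_convexHull_extremePoints
          (hF.isCompact (hV.isCompact_convexHull (𝕜 := ℝ))) hconv).symm
    _ ⊆ closure (convexHull ℝ (F ∩ V)) := by
        refine closure_mono (convexHull_mono ?_)
        rw [hF.isExtreme.extremePoints_eq]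
        exact Set.inter_subset_inter_right _ extremePoints_convexHull_subset
    _ = convexHull ℝ (F ∩ V) :=
        ((hV.subset Set.inter_subset_right).isCompact_convexHull (𝕜 := ℝ)).isClosed.closure_eq

lemma eq_extremePoints_convexHull_of_subset {V T : Set E}
    (hV : V = (convexHull ℝ V).extremePoints ℝ) (hTV : T ⊆ V) :
    T = (convexHull ℝ T).extremePoints ℝ := by
  refine subset_antisymm (fun t ht => ?_) extremePoints_convexHull_subset
  refine inter_extremePoints_subset_extremePoints_of_subset (convexHull_mono hTV)
    ⟨subset_convexHull ℝ T ht, ?_⟩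
  rw [← hV]
  exact hTV ht

lemma mem_image_convexHull_pair_of_le {f : E → ℝ} {x y : E}
    (hf : ContinuousOn f (convexHull ℝ {x, y})) {c : ℝ} (hx : f x ≤ c) (hy : c ≤ f y) :
    c ∈ f '' convexHull ℝ {x, y} :=
  (convex_convexHull ℝ _).isPreconnected.intermediate_value (subset_convexHull ℝ _ (by simp))
    (subset_convexHull ℝ _ (by simp)) hf ⟨hx, hy⟩

lemma exists_injOn_continuousLinearMap [FiniteDimensional ℝ E] {A : Set E} (hA : A.Finite) :
    ∃ χ : E →L[ℝ] ℝ, A.InjOn χ := by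
  have := hA.to_subtype
  obtain ⟨f, hf⟩ := Module.exists_dual_forall_apply_ne_zero (K := ℝ)
    (fun p : {p : A × A // p.1 ≠ p.2} => (p.1.1 : E) - p.1.2)
    fun p => sub_ne_zero.2 (Subtype.coe_injective.ne p.2)
  refine ⟨LinearMap.toContinuousLinearMap f, fun x hx y hy hxy => ?_⟩
  by_contra hne
  exact hf ⟨(⟨x, hx⟩, ⟨y, hy⟩), fun h => hne (congrArg Subtype.val h)⟩
    (by simpa [sub_eq_zero] using hxy)

lemma finrank_vectorSpan_insert_le_card {k V P : Type*} [DivisionRing k] [AddCommGroup V]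
    [Module k V] [AddTorsor V P] (s : Finset P) (p : P) :
    finrank k (vectorSpan k (insert p (s : Set P))) ≤ #s := by
  classical
  have h := finrank_vectorSpan_image_finset_le k id (insert p s) (n := #(insert p s) - 1)
    (by have := card_pos.2 (insert_nonempty p s); omega)
  rw [image_id, coe_insert] at h
  have := card_insert_le p s
  omega

lemma exists_forall_eq_lt_of_not_vectorSpan_le [FiniteDimensional ℝ E] {S T : Set E} {p : E}
    (hp : p ∈ S) (h : ¬ vectorSpan ℝ T ≤ vectorSpan ℝ S) :
    ∃ ℓ : E →L[ℝ] ℝ, (∀ x ∈ S, ℓ x = ℓ p) ∧ ∃ u ∈ T, ℓ p < ℓ u := by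
  obtain ⟨x, hxT, hxS⟩ := SetLike.not_le_iff_exists.1 h
  obtain ⟨f, hfx, hfS⟩ := Submodule.exists_dual_map_eq_bot_of_notMem hxS inferInstance
  have hS : ∀ y ∈ S, f y = f p := fun y hy => by
    have := Submodule.mem_map_of_mem (f := f) (vsub_mem_vectorSpan ℝ hy hp)
    rw [hfS, Submodule.mem_bot, vsub_eq_sub, map_sub, sub_eq_zero] at this
    exact this
  obtain ⟨u, hu, hup⟩ : ∃ u ∈ T, f u ≠ f p := by
    by_contra! hT
    refine hfx (LinearMap.mem_ker.1 ((vectorSpan_def ℝ T ▸ Submodule.span_le.2 ?_) hxT))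
    rintro _ ⟨a, ha, b, hb, rfl⟩
    simp [hT a ha, hT b hb]
  rcases hup.lt_or_gt with hlt | hgt
  · exact ⟨-LinearMap.toContinuousLinearMap f, fun y hy => by simp [hS y hy], u, hu, by simpa⟩
  · exact ⟨LinearMap.toContinuousLinearMap f, hS, u, hu, hgt⟩

end Convex

section EdgeGraph

variable {E : Type*} [NormedAddCommGroup E] [NormedSpace ℝ E]

def edgeGraph (V : Finset E) : SimpleGraph E where
  Adj v w := v ∈ V ∧ w ∈ V ∧ v ≠ w ∧
    ∃ g : E →L[ℝ] ℝ, g v = g w ∧ ∀ u ∈ V, u ≠ v → u ≠ w → g u < g v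
  symm := ⟨fun _ _ ⟨hv, hw, hvw, g, hg, hlt⟩ =>
    ⟨hw, hv, hvw.symm, g, hg.symm, fun u hu h₁ h₂ => hg ▸ hlt u hu h₂ h₁⟩⟩
  loopless := ⟨fun _ h => h.2.2.1 rfl⟩

variable {V : Finset E}

lemma edgeGraph_adj {v w : E} :
    (edgeGraph V).Adj v w ↔ v ∈ V ∧ w ∈ V ∧ v ≠ w ∧
      ∃ g : E →L[ℝ] ℝ, g v = g w ∧ ∀ u ∈ V, u ≠ v → u ≠ w → g u < g v :=
  Iff.rfl

lemma edgeGraph.mem_of_adj {v w : E} (h : (edgeGraph V).Adj v w) : w ∈ V :=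
  (edgeGraph_adj.1 h).2.1

lemma edgeGraph.isExposed_of_adj {v w : E} (h : (edgeGraph V).Adj v w) :
    IsExposed ℝ (convexHull ℝ (V : Set E)) (convexHull ℝ {v, w}) := by
  obtain ⟨hv, hw, -, g, hg, hlt⟩ := edgeGraph_adj.1 h
  have hmax : ∀ y ∈ convexHull ℝ (V : Set E), g y ≤ g v := by
    refine fun y hy => convexHull_min (fun u hu => ?_) (convex_halfSpace_le g.isLinear _) hy
    by_cases huv : u = v
    · exact (congrArg g huv).le
    by_cases huw : u = w
    · exact (congrArg g huw).trans_le hg.ge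
    exact (hlt u hu huv huw).le
  set F := g.toExposed (convexHull ℝ (V : Set E))
  have hF : IsExposed ℝ (convexHull ℝ (V : Set E)) F := ContinuousLinearMap.toExposed.isExposed
  have hFV : F ∩ V = {v, w} := by
    ext u
    simp only [F, ContinuousLinearMap.toExposed, Set.mem_inter_iff, Set.mem_ofPred_eq,
      Set.mem_insert_iff, Set.mem_singleton_iff, mem_coe]
    constructor
    · rintro ⟨⟨-, hu⟩, huV⟩
      by_contra! hne
      exact (hlt u huV hne.1 hne.2).not_ge (hu v (subset_convexHull ℝ _ hv))
    · rintro (rfl | rfl)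
      · exact ⟨⟨subset_convexHull ℝ _ hv, hmax⟩, hv⟩
      · exact ⟨⟨subset_convexHull ℝ _ hw, fun y hy => hg ▸ hmax y hy⟩, hw⟩
  rw [← hFV, ← hF.eq_convexHull_inter V.finite_toSet]
  exact hF

lemma edgeGraph_filter_le {ℓ : E →L[ℝ] ℝ} {M : ℝ} (hM : ∀ u ∈ V, ℓ u ≤ M) :
    edgeGraph (V.filter (ℓ · = M)) ≤ edgeGraph V := by
  classical
  intro a b hab
  obtain ⟨ha, hb, hne, g, hg, hlt⟩ := edgeGraph_adj.1 hab
  rw [mem_filter] at ha hb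
  have hlex : ∀ u ∈ (V.erase a).erase b, toLex (ℓ u, g u) < toLex (ℓ a, g a) := by
    intro u hu
    obtain ⟨hub, hua, hu⟩ : u ≠ b ∧ u ≠ a ∧ u ∈ V := by simpa using hu
    rw [Prod.Lex.toLex_lt_toLex, ha.2]
    rcases (hM u hu).lt_or_eq with h | h
    exacts [Or.inl h, Or.inr ⟨h, hlt u (mem_filter.2 ⟨hu, h⟩) hua hub⟩]
  obtain ⟨ε, hε⟩ :=
    ((eventually_all_finset _).2 fun u hu => eventually_add_mul_lt_of_toLex_lt (hlex u hu)).exists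
  refine edgeGraph_adj.2 ⟨ha.1, hb.1, hne, ℓ + ε • g, by simp [ha.2, hb.2, hg],
    fun u hu hua hub => ?_⟩
  simpa using hε u (by simp [hu, hua, hub])

lemma edgeGraph_adj_of_div_lt {v w : E} (hv : v ∈ V) (hw : w ∈ V) (hvw : v ≠ w)
    {h φ : E →L[ℝ] ℝ} (hh : ∀ u ∈ V, u ≠ v → h u < h v)
    (hφ : ∀ u ∈ V, u ≠ v → u ≠ w → (φ u - φ v) / (h v - h u) < (φ w - φ v) / (h v - h w)) :
    (edgeGraph V).Adj v w := by
  set ρ := (φ w - φ v) / (h v - h w)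
  have key : ∀ u ∈ V, u ≠ v →
      (φ + ρ • h) u - (φ + ρ • h) v = (h v - h u) * ((φ u - φ v) / (h v - h u) - ρ) := by
    intro u hu huv
    have := (sub_pos.2 (hh u hu huv)).ne'
    simp only [add_apply, smul_apply, smul_eq_mul]
    field_simp
    ring
  refine edgeGraph_adj.2 ⟨hv, hw, hvw, φ + ρ • h, ?_, fun u hu huv huw => ?_⟩
  · linarith [key w hw hvw.symm]
  · nlinarith [key u hu huv, hφ u hu huv huw, hh u hu huv]

variable [FiniteDimensional ℝ E]

theorem edgeGraph.exists_adj_lt (hV : (V : Set E) = (convexHull ℝ (V : Set E)).extremePoints ℝ)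
    {v : E} (hv : v ∈ V) (ℓ : E →L[ℝ] ℝ) (hℓ : ∃ u ∈ V, ℓ v < ℓ u) :
    ∃ w, (edgeGraph V).Adj v w ∧ ℓ v < ℓ w := by
  classical
  obtain ⟨u₀, hu₀, hlt₀⟩ := hℓ
  obtain ⟨h, hh⟩ := exists_forall_lt_of_mem_extremePoints V.finite_toSet
    (show v ∈ _ from hV ▸ hv)
  set W := V.erase v
  have hq : ∀ u ∈ W, 0 < h v - h u := fun u hu =>
    sub_pos.2 (hh u (mem_of_mem_erase hu) (ne_of_mem_erase hu))
  -- `v + d u` is where the ray from `v` through `u` meets the hyperplane `h = h v - 1`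
  set d : E → E := fun u => (h v - h u)⁻¹ • (u - v)
  have hd : Set.InjOn d W := injOn_inv_smul_sub_of_subset_extremePoints
    (subset_convexHull ℝ _ hv) (fun u hu => hV ▸ mem_coe.2 (mem_of_mem_erase hu))
    (fun hv => notMem_erase v V hv) hq
  obtain ⟨χ, hχ⟩ := exists_injOn_continuousLinearMap (W.finite_toSet.image d)
  set σ : (E →L[ℝ] ℝ) → E → ℝ := fun φ u => (φ u - φ v) / (h v - h u)
  have hσχ : Set.InjOn (σ χ) W := fun u₁ hu₁ u₂ hu₂ he => hd hu₁ hu₂ <|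
    hχ (Set.mem_image_of_mem d hu₁) (Set.mem_image_of_mem d hu₂) <| by
      simpa [σ, d, div_eq_inv_mul] using he
  -- `w` maximises the slope `σ ℓ`, ties being broken by the generic functional `χ`
  have hu₀W : u₀ ∈ W := mem_erase.2 ⟨fun h => hlt₀.ne (congrArg ℓ h).symm, hu₀⟩
  obtain ⟨w, hw, hwmax⟩ := W.exists_max_image (fun u => toLex (σ ℓ u, σ χ u)) ⟨u₀, hu₀W⟩
  have hlex : ∀ u ∈ W.erase w, toLex (σ ℓ u, σ χ u) < toLex (σ ℓ w, σ χ w) := fun u hu =>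
    (hwmax u (mem_of_mem_erase hu)).lt_of_ne fun he => ne_of_mem_erase hu <|
      hσχ (mem_of_mem_erase hu) hw (congrArg (fun x => (ofLex x).2) he)
  obtain ⟨ε, hε⟩ := ((eventually_all_finset _).2 fun u hu =>
    eventually_add_mul_lt_of_toLex_lt (hlex u hu)).exists
  refine ⟨w, edgeGraph_adj_of_div_lt (φ := ℓ + ε • χ) hv (mem_of_mem_erase hw)
    (ne_of_mem_erase hw).symm hh fun u hu huv huw => ?_, ?_⟩
  · simpa [σ, add_div, mul_div_assoc, add_sub_add_comm, ← mul_sub] using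
      hε u (by simp [W, hu, huv, huw])
  · have hσw : σ ℓ u₀ ≤ σ ℓ w := Prod.Lex.monotone_fst _ _ (hwmax u₀ hu₀W)
    have := (div_pos_iff_of_pos_right (hq w hw)).1
      ((div_pos (sub_pos.2 hlt₀) (hq u₀ hu₀W)).trans_le hσw)
    linarith

theorem edgeGraph.exists_reachable_max
    (hV : (V : Set E) = (convexHull ℝ (V : Set E)).extremePoints ℝ) (ℓ : E →L[ℝ] ℝ)
    {C : Set E} {v : E} (hv : v ∈ V) (hvC : v ∉ C) (hC : ∀ c ∈ C, ℓ c ≤ ℓ v) :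
    ∃ t ∈ V, (∀ u ∈ V, ℓ u ≤ ℓ t) ∧ ((edgeGraph V).withoutVerts C).Reachable v t := by
  classical
  set R := V.filter fun u => u ∉ C ∧ ℓ v ≤ ℓ u ∧ ((edgeGraph V).withoutVerts C).Reachable v u
  obtain ⟨t, ht, htmax⟩ := R.exists_max_image ℓ ⟨v, mem_filter.2 ⟨hv, hvC, le_rfl, .rfl⟩⟩
  obtain ⟨htV, htC, hvt, hreach⟩ := mem_filter.1 ht
  refine ⟨t, htV, fun u hu => ?_, hreach⟩
  by_contra! hlt
  obtain ⟨w, hadj, htw⟩ := edgeGraph.exists_adj_lt hV htV ℓ ⟨u, hu, hlt⟩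
  have hwC : w ∉ C := fun hw => by linarith [hC w hw]
  have hwR : w ∈ R := mem_filter.2 ⟨edgeGraph.mem_of_adj hadj, hwC, by linarith,
    hreach.trans (SimpleGraph.withoutVerts_adj.2 ⟨hadj, htC, hwC⟩).reachable⟩
  exact (htmax w hwR).not_gt htw

theorem edgeGraph.reachable_of_eq_max
    (hV : (V : Set E) = (convexHull ℝ (V : Set E)).extremePoints ℝ) (ℓ : E →L[ℝ] ℝ) {M : ℝ}
    (hM : ∀ u ∈ V, ℓ u ≤ M) {C : Set E} (hC : ∀ c ∈ C, ℓ c < M) {x y : E} (hx : x ∈ V)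
    (hy : y ∈ V) (hxM : ℓ x = M) (hyM : ℓ y = M) :
    ((edgeGraph V).withoutVerts C).Reachable x y := by
  classical
  set T := V.filter (ℓ · = M)
  have hT : (T : Set E) = (convexHull ℝ (T : Set E)).extremePoints ℝ :=
    eq_extremePoints_convexHull_of_subset hV (coe_subset.2 (filter_subset _ _))
  obtain ⟨χ, hχ⟩ := exists_injOn_continuousLinearMap T.finite_toSet
  -- walking up in the face `T` along `χ` ends at the unique maximiser of `χ` on `T`
  obtain ⟨tx, htx, htxmax, hxr⟩ := edgeGraph.exists_reachable_max hT χ (C := ∅)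
    (mem_filter.2 ⟨hx, hxM⟩) (Set.notMem_empty x) (by simp)
  obtain ⟨ty, hty, htymax, hyr⟩ := edgeGraph.exists_reachable_max hT χ (C := ∅)
    (mem_filter.2 ⟨hy, hyM⟩) (Set.notMem_empty y) (by simp)
  have htxy : tx = ty := hχ htx hty (le_antisymm (htymax tx htx) (htxmax ty hty))
  have hle : (edgeGraph T).withoutVerts ∅ ≤ (edgeGraph V).withoutVerts C := by
    intro a b hab
    obtain ⟨hab, -, -⟩ := SimpleGraph.withoutVerts_adj.1 hab
    have hM' : ∀ {z}, z ∈ T → z ∉ C := fun hz hzC =>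
      (hC _ hzC).ne (mem_filter.1 hz).2
    exact SimpleGraph.withoutVerts_adj.2 ⟨edgeGraph_filter_le hM hab,
      hM' (edgeGraph.mem_of_adj hab.symm), hM' (edgeGraph.mem_of_adj hab)⟩
  exact (hxr.trans (htxy ▸ hyr.symm)).mono hle

theorem edgeGraph.reachable_of_le
    (hV : (V : Set E) = (convexHull ℝ (V : Set E)).extremePoints ℝ) (ℓ : E →L[ℝ] ℝ)
    {C : Set E} {L : ℝ} (hC : ∀ c ∈ C, ℓ c ≤ L) (hL : ∃ u ∈ V, L < ℓ u) {s b : E}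
    (hs : s ∈ V) (hb : b ∈ V) (hsC : s ∉ C) (hbC : b ∉ C) (hLs : L ≤ ℓ s) (hLb : L ≤ ℓ b) :
    ((edgeGraph V).withoutVerts C).Reachable s b := by
  obtain ⟨ts, hts, htsmax, hsr⟩ :=
    edgeGraph.exists_reachable_max hV ℓ hs hsC fun c hc => (hC c hc).trans hLs
  obtain ⟨tb, htb, htbmax, hbr⟩ :=
    edgeGraph.exists_reachable_max hV ℓ hb hbC fun c hc => (hC c hc).trans hLb
  obtain ⟨u, hu, hLu⟩ := hL
  have htop := edgeGraph.reachable_of_eq_max hV ℓ htsmax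
    (fun c hc => (hC c hc).trans_lt (hLu.trans_le (htsmax u hu))) hts htb rfl
    (le_antisymm (htsmax tb htb) (htbmax ts hts))
  exact hsr.trans (htop.trans hbr.symm)

theorem edgeGraph.le_card_filter_adj
    (hV : (V : Set E) = (convexHull ℝ (V : Set E)).extremePoints ℝ) {r : ℕ}
    (hdim : r ≤ finrank ℝ (vectorSpan ℝ (V : Set E))) [DecidableRel (edgeGraph V).Adj]
    {v : E} (hv : v ∈ V) : r ≤ #(V.filter ((edgeGraph V).Adj v)) := by
  set N := V.filter ((edgeGraph V).Adj v)
  have hspan : vectorSpan ℝ (V : Set E) ≤ vectorSpan ℝ (insert v (N : Set E)) := by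
    by_contra h
    obtain ⟨ℓ, hℓ, hlt⟩ := exists_forall_eq_lt_of_not_vectorSpan_le (Set.mem_insert v _) h
    obtain ⟨w, hvw, hw⟩ := edgeGraph.exists_adj_lt hV hv ℓ hlt
    exact hw.ne' (hℓ w (Set.mem_insert_of_mem _ (mem_filter.2 ⟨edgeGraph.mem_of_adj hvw, hvw⟩)))
  exact hdim.trans ((Submodule.finrank_mono hspan).trans (finrank_vectorSpan_insert_le_card N v))

theorem edgeGraph.isVertexConnectedOn
    (hV : (V : Set E) = (convexHull ℝ (V : Set E)).extremePoints ℝ) {r : ℕ}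
    (hdim : r ≤ finrank ℝ (vectorSpan ℝ (V : Set E))) : (edgeGraph V).IsVertexConnectedOn V r := by
  intro C _ hC s hs b hb hsC hbC
  have hspan : ¬ vectorSpan ℝ (V : Set E) ≤ vectorSpan ℝ (insert s (C : Set E)) := fun h => by
    have := (Submodule.finrank_mono h).trans (finrank_vectorSpan_insert_le_card C s)
    omega
  obtain ⟨ℓ, hℓ, u, hu, hlt⟩ := exists_forall_eq_lt_of_not_vectorSpan_le (Set.mem_insert s _) hspan
  have hCℓ : ∀ c ∈ (C : Set E), ℓ c = ℓ s := fun c hc => hℓ c (Set.mem_insert_of_mem _ hc)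
  by_cases hsb : ℓ s ≤ ℓ b
  · exact edgeGraph.reachable_of_le hV ℓ (fun c hc => (hCℓ c hc).le) ⟨u, hu, hlt⟩
      hs hb hsC hbC le_rfl hsb
  · exact edgeGraph.reachable_of_le hV (-ℓ) (L := -ℓ s) (fun c hc => by simp [hCℓ c hc])
      ⟨b, hb, by simp; linarith⟩ hs hb hsC hbC le_rfl (by simp; linarith)

end EdgeGraph

/-- Refined Tverberg theorem for triangle-free polytopes, `d = 1`: let `P = conv V` be a
polytope of dimension at least `r` whose vertex set is `V` and whose 1-skeleton is
triangle-free.  Then for every `f : ℝ^N → ℝ` continuous on `P` there are `r-1` edges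
`conv{u_i, w_i}` of `P` with pairwise disjoint vertex pairs, and a vertex `v` distinct
from all `u_i, w_i`, such that `f v ∈ f(conv{u_i, w_i})` for every `i`. -/
theorem tverberg_triangle_free_polytope_edges (r N : ℕ) (hr : 1 ≤ r)
    (V : Finset (EuclideanSpace ℝ (Fin N)))
    (hdim : r ≤
      Module.finrank ℝ (affineSpan ℝ (V : Set (EuclideanSpace ℝ (Fin N)))).direction)
    (hvert : (V : Set (EuclideanSpace ℝ (Fin N))) =
      Set.extremePoints ℝ (convexHull ℝ (V : Set (EuclideanSpace ℝ (Fin N)))))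
    (htrianglefree : ¬ ∃ u ∈ V, ∃ v ∈ V, ∃ w ∈ V, u ≠ v ∧ u ≠ w ∧ v ≠ w ∧
      IsExposed ℝ (convexHull ℝ (V : Set (EuclideanSpace ℝ (Fin N))))
        (convexHull ℝ {u, v}) ∧
      IsExposed ℝ (convexHull ℝ (V : Set (EuclideanSpace ℝ (Fin N))))
        (convexHull ℝ {u, w}) ∧
      IsExposed ℝ (convexHull ℝ (V : Set (EuclideanSpace ℝ (Fin N))))
        (convexHull ℝ {v, w}))
    (f : EuclideanSpace ℝ (Fin N) → ℝ)
    (hf : ContinuousOn f (convexHull ℝ (V : Set (EuclideanSpace ℝ (Fin N))))) :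
    ∃ u w : Fin (r - 1) → EuclideanSpace ℝ (Fin N), ∃ v : EuclideanSpace ℝ (Fin N),
      (∀ i, u i ∈ V) ∧ (∀ i, w i ∈ V) ∧ (∀ i, u i ≠ w i) ∧
      (∀ i, IsExposed ℝ (convexHull ℝ (V : Set (EuclideanSpace ℝ (Fin N))))
        (convexHull ℝ {u i, w i})) ∧
      Pairwise (Function.onFun Disjoint
        (fun i => ({u i, w i} : Set (EuclideanSpace ℝ (Fin N))))) ∧
      v ∈ V ∧ (∀ i, v ≠ u i ∧ v ≠ w i) ∧
      (∀ i, f v ∈ f '' convexHull ℝ {u i, w i}) := by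
  classical
  set G := edgeGraph V
  rw [direction_affineSpan] at hdim
  have hG : G.CliqueFree 3 := fun t ht => by
    obtain ⟨a, b, c, hab, hac, hbc, -⟩ := SimpleGraph.is3Clique_iff.1 ht
    exact htrianglefree ⟨a, edgeGraph.mem_of_adj hab.symm, b, edgeGraph.mem_of_adj hab, c,
      edgeGraph.mem_of_adj hac, hab.ne, hac.ne, hbc.ne, edgeGraph.isExposed_of_adj hab,
      edgeGraph.isExposed_of_adj hac, edgeGraph.isExposed_of_adj hbc⟩
  have hV : V.Nonempty := by
    by_contra! h
    rw [h, coe_empty, vectorSpan_empty, finrank_bot] at hdim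
    omega
  obtain ⟨v, hv, u, w, hu, hw, huw, hvuw, hadj⟩ := G.exists_adj_pairs_around f hr
    (SimpleGraph.two_mul_le_card_of_cliqueFree hG hr hV
      fun _ hv => edgeGraph.le_card_filter_adj hvert hdim hv)
    (fun _ _ => edgeGraph.mem_of_adj) (edgeGraph.isVertexConnectedOn hvert hdim)
  refine ⟨u, w, v, fun i => edgeGraph.mem_of_adj (hadj i).1.symm,
    fun i => edgeGraph.mem_of_adj (hadj i).1, fun i => (hadj i).1.ne,
    fun i => edgeGraph.isExposed_of_adj (hadj i).1, pairwise_disjoint_pair hu hw huw, hv, hvuw,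
    fun i => ?_⟩
  have hsub := Set.pair_subset (edgeGraph.mem_of_adj (hadj i).1.symm)
    (edgeGraph.mem_of_adj (hadj i).1)
  exact mem_image_convexHull_pair_of_le (hf.mono (convexHull_mono hsub)) (hadj i).2.1 (hadj i).2.2
end

section
/- Let G be a triangle-free simple graph in which every vertex has degree at least r, and let v_1, …, v_r be r distinct vertices of G. Then there exist distinct vertices w_1, …, w_{r-1}, none of which belongs to {v_1, …, v_r}, such that v_i is adjacent to w_i in G for every i = 1, …, r-1. -/
/-- In a triangle-free simple graph with minimum degree at least `r`, given `r` distinct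
vertices `v_1, …, v_r` there are distinct vertices `w_1, …, w_{r-1}` outside
`{v_1, …, v_r}` such that `v_i` is adjacent to `w_i` for every `i ≤ r-1`. -/
theorem triangle_free_matching {α : Type*} (G : SimpleGraph α) (r : ℕ)
    (htf : G.CliqueFree 3)
    (hdeg : ∀ a : α, (r : ℕ∞) ≤ (G.neighborSet a).encard)
    (v : Fin r → α) (hv : Function.Injective v) :
    ∃ w : Fin (r - 1) → α,
      Function.Injective w ∧
      (∀ i : Fin (r - 1), ∀ j : Fin r, w i ≠ v j) ∧
      (∀ i : Fin (r - 1), G.Adj (v ⟨i.1, lt_of_lt_of_le i.2 (Nat.sub_le r 1)⟩) (w i)) := by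
  classical
  set u : Fin (r - 1) → α := fun i => v ⟨i.1, lt_of_lt_of_le i.2 (Nat.sub_le r 1)⟩ with hu
  have hu_inj : Function.Injective u := by
    intro i j hij
    have h := hv hij
    have h2 : (i : ℕ) = (j : ℕ) := congrArg (Fin.val (n := r)) h
    exact Fin.ext h2
  have hN : ∀ i : Fin (r - 1), ∃ N : Finset α,
      (↑N : Set α) ⊆ G.neighborSet (u i) ∧ N.card = r := by
    intro i
    obtain ⟨s, hsub, hsc⟩ := Set.exists_subset_encard_eq (hdeg (u i))
    have hfin : s.Finite := Set.finite_of_encard_eq_coe hsc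
    refine ⟨hfin.toFinset, by simpa using hsub, ?_⟩
    have h2 := hfin.encard_eq_coe_toFinset_card
    rw [h2] at hsc
    exact_mod_cast hsc
  choose N hNsub hNcard using hN
  set V : Finset α := Finset.univ.image v with hV
  have hVcard : V.card = r := by
    rw [hV, Finset.card_image_of_injective _ hv, Finset.card_univ, Fintype.card_fin]
  set t : Fin (r - 1) → Finset α := fun i => N i \ V with ht
  have hadjN : ∀ i, ∀ c ∈ N i, G.Adj (u i) c := fun i c hc => hNsub i hc
  have hall : ∀ s : Finset (Fin (r - 1)), s.card ≤ (s.biUnion t).card := by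
    intro s
    rcases s.eq_empty_or_nonempty with rfl | ⟨i0, hi0⟩
    · simp
    have hscard : s.card ≤ r - 1 := by
      have := Finset.card_le_univ s
      simpa using this
    by_cases hadj : ∃ i ∈ s, ∃ j ∈ s, G.Adj (u i) (u j)
    · obtain ⟨i, hi, j, hj, hij⟩ := hadj
      have hdisj : Disjoint (N i) (N j) := by
        rw [Finset.disjoint_left]
        intro c hci hcj
        exact htf {u i, u j, c} ((SimpleGraph.is3Clique_triple_iff).2
          ⟨hij, hadjN i c hci, hadjN j c hcj⟩)
      have h1 : (N i ∩ V).card + (t i).card = (N i).card :=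
        Finset.card_inter_add_card_sdiff _ _
      have h2 : (N j ∩ V).card + (t j).card = (N j).card :=
        Finset.card_inter_add_card_sdiff _ _
      have hdisj2 : Disjoint (N i ∩ V) (N j ∩ V) :=
        hdisj.mono Finset.inter_subset_left Finset.inter_subset_left
      have h3 : (N i ∩ V).card + (N j ∩ V).card ≤ r := by
        rw [← Finset.card_union_of_disjoint hdisj2, ← hVcard]
        exact Finset.card_le_card (Finset.union_subset Finset.inter_subset_right
          Finset.inter_subset_right)
      have hsubU : t i ∪ t j ⊆ s.biUnion t := by
        apply Finset.union_subset
        · exact Finset.subset_biUnion_of_mem t hi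
        · exact Finset.subset_biUnion_of_mem t hj
      have hdisjt : Disjoint (t i) (t j) :=
        hdisj.mono Finset.sdiff_subset Finset.sdiff_subset
      have h4 : (t i).card + (t j).card ≤ (s.biUnion t).card := by
        rw [← Finset.card_union_of_disjoint hdisjt]
        exact Finset.card_le_card hsubU
      have hi' := hNcard i
      have hj' := hNcard j
      omega
    · push_neg at hadj
      have hdisj : Disjoint (N i0 ∩ V) (s.image u) := by
        rw [Finset.disjoint_left]
        intro x hx hx2
        obtain ⟨j, hj, rfl⟩ := Finset.mem_image.1 hx2
        exact (hadj i0 hi0 j hj) (hadjN i0 _ (Finset.mem_inter.1 hx).1)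
      have himg : (s.image u) ⊆ V := by
        intro x hx
        obtain ⟨j, hj, rfl⟩ := Finset.mem_image.1 hx
        exact Finset.mem_image.2 ⟨_, Finset.mem_univ _, rfl⟩
      have h3 : (N i0 ∩ V).card + s.card ≤ r := by
        calc (N i0 ∩ V).card + s.card
            = (N i0 ∩ V).card + (s.image u).card := by
              rw [Finset.card_image_of_injective s hu_inj]
          _ = (N i0 ∩ V ∪ s.image u).card :=
              (Finset.card_union_of_disjoint hdisj).symm
          _ ≤ V.card := Finset.card_le_card
              (Finset.union_subset Finset.inter_subset_right himg)
          _ = r := hVcard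
      have h1 : (N i0 ∩ V).card + (t i0).card = (N i0).card :=
        Finset.card_inter_add_card_sdiff _ _
      have h4 : (t i0).card ≤ (s.biUnion t).card :=
        Finset.card_le_card (Finset.subset_biUnion_of_mem t hi0)
      have hi' := hNcard i0
      omega
  obtain ⟨w, hw_inj, hw_mem⟩ :=
    (Finset.all_card_le_biUnion_card_iff_exists_injective t).1 hall
  refine ⟨w, hw_inj, ?_, ?_⟩
  · intro i j
    have := hw_mem i
    rw [ht] at this
    have hnotV := (Finset.mem_sdiff.1 this).2
    intro hEq
    exact hnotV (hEq ▸ Finset.mem_image.2 ⟨j, Finset.mem_univ _, rfl⟩)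
  · intro i
    have := hw_mem i
    rw [ht] at this
    exact hadjN i _ (Finset.mem_sdiff.1 this).1
end
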